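/- arXiv:2603.23243 — 8 statements merged into one kernel-verified Lean document; each statement's English description precedes it below -/
import Mathlib

section
/- For every integer k ≥ 1, the identity ∑_{s=1}^{k} ∏_{1≤i≤k, i≠s} (x_i − x_s + 1)/(x_i − x_s) = k holds in the field ℚ(x_1,…,x_k). -/
/-!
Let `P = ∏ᵢ (X - xᵢ - 1) - ∏ᵢ (X - xᵢ)`. Both products are monic of degree `k`, so `P` has
degree `< k`, and Lagrange interpolation at the distinct nodes `xₛ` expresses its coefficient of
`X^(k-1)`, namely `-k`, as `∑ₛ P(xₛ) / ∏_{i ≠ s} (xₛ - xᵢ)`. Since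
`P(xₛ) = -∏_{i ≠ s} (xₛ - xᵢ - 1)`, this is minus the sum in question.
-/

/-- The variable `x_i` viewed inside the fraction field `ℚ(x_1, …, x_k)`. -/
noncomputable def Xv (k : ℕ) (i : Fin k) : FractionRing (MvPolynomial (Fin k) ℚ) :=
  algebraMap (MvPolynomial (Fin k) ℚ) (FractionRing (MvPolynomial (Fin k) ℚ)) (MvPolynomial.X i)

namespace Lagrange

open Polynomial Finset

section CommRing

variable {R ι : Type*} [CommRing R] (s : Finset ι) (v : ι → R) (c : R)

theorem degree_nodal_add_const_sub_nodal_lt [Nontrivial R] :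
    (nodal s (fun i => v i + c) - nodal s v).degree < #s := by
  have h := degree_sub_lt_left (p := nodal s (fun i => v i + c)) (q := nodal s v)
    (by rw [degree_nodal, degree_nodal]) nodal_ne_zero
    (nodal_monic.leadingCoeff.trans nodal_monic.leadingCoeff.symm)
  rwa [degree_nodal] at h

theorem coeff_nodal_add_const_sub_nodal :
    (nodal s (fun i => v i + c) - nodal s v).coeff (#s - 1) = -(#s * c) := by
  rcases s.eq_empty_or_nonempty with rfl | hs
  · simp
  rw [coeff_sub, nodal_eq, nodal_eq, prod_X_sub_C_coeff_card_pred s _ hs.card_pos,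
    prod_X_sub_C_coeff_card_pred s _ hs.card_pos, sum_add_distrib, sum_const, nsmul_eq_mul]
  ring

theorem eval_nodal_add_const_at_node [DecidableEq ι] {t : ι} (ht : t ∈ s) :
    (nodal s (fun i => v i + c)).eval (v t) = -c * ∏ i ∈ s.erase t, (v t - v i - c) := by
  rw [eval_nodal, ← mul_prod_erase s _ ht]
  simp only [sub_add_eq_sub_sub, sub_self, zero_sub]

end CommRing

theorem sum_prod_sub_add_div_sub {F ι : Type*} [Field F] [DecidableEq ι] (s : Finset ι)
    {v : ι → F} (hv : Set.InjOn v s) {c : F} (hc : c ≠ 0) :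
    ∑ t ∈ s, ∏ i ∈ s.erase t, (v i - v t + c) / (v i - v t) = #s := by
  have hcoeff := coeff_eq_sum hv (degree_nodal_add_const_sub_nodal_lt s v c)
  rw [coeff_nodal_add_const_sub_nodal] at hcoeff
  have hterm : ∀ t ∈ s, (nodal s (fun i => v i + c) - nodal s v).eval (v t) /
      ∏ i ∈ s.erase t, (v t - v i) = -c * ∏ i ∈ s.erase t, (v i - v t + c) / (v i - v t) := by
    intro t ht
    rw [eval_sub, eval_nodal_add_const_at_node s v c ht, eval_nodal_at_node ht, sub_zero,
      mul_div_assoc, ← prod_div_distrib]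
    congr 1
    refine prod_congr rfl fun i _ => ?_
    rw [← neg_div_neg_eq]
    congr 1 <;> ring
  rw [sum_congr rfl hterm, ← mul_sum] at hcoeff
  exact mul_left_cancel₀ (neg_ne_zero.mpr hc) (by rw [← hcoeff]; ring)

end Lagrange

theorem stmt_0_general (k : ℕ) :
    ∑ s : Fin k, ∏ i ∈ Finset.univ.erase s,
      (Xv k i - Xv k s + 1) / (Xv k i - Xv k s)
    = (k : FractionRing (MvPolynomial (Fin k) ℚ)) := by
  have hinj : Function.Injective (Xv k) := fun i j h =>
    MvPolynomial.X_injective (IsFractionRing.injective (MvPolynomial (Fin k) ℚ) _ h)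
  simpa using Lagrange.sum_prod_sub_add_div_sub Finset.univ hinj.injOn one_ne_zero

/-- for every `k ≥ 1`,
`∑_{s=1}^{k} ∏_{1 ≤ i ≤ k, i ≠ s} (x_i − x_s + 1)/(x_i − x_s) = k` in `ℚ(x_1,…,x_k)`. -/
theorem stmt_0 (k : ℕ) (hk : 1 ≤ k) :
    ∑ s : Fin k, ∏ i ∈ Finset.univ.erase s,
      (Xv k i - Xv k s + 1) / (Xv k i - Xv k s)
    = (k : FractionRing (MvPolynomial (Fin k) ℚ)) :=
  stmt_0_general k
end

section
/- For every integer k ≥ 1 and every r ∈ ℕ, the identity ∑_{σ ∈ S_k} ∏_{s=1}^{k} x_{σ(s)}^r · ∏_{1≤i<j≤k} (x_{σ(i)} − x_{σ(j)} + 1)/(x_{σ(i)} − x_{σ(j)}) = k! · (x_1 x_2 ⋯ x_k)^r holds in the field ℚ(x_1,…,x_k). (Equivalently, in the rank-1 shuffle algebra the k-th shuffle power of x_1^r equals k!·(x_1⋯x_k)^r.) -/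
open Polynomial Finset

/-- Lagrange-type identity: for injective `y`,
`∑ m, ∏_{j ≠ m} (y m - y j + 1)/(y m - y j) = k`. -/
lemma lemA {F : Type*} [Field F] {k : ℕ} (y : Fin k → F) (hy : Function.Injective y) :
    ∑ m : Fin k, ∏ j ∈ Finset.univ.erase m, ((y m - y j + 1) / (y m - y j)) = (k : F) := by
  classical
  rcases Nat.eq_zero_or_pos k with hk | hk
  · subst hk; simp
  have hvs : Set.InjOn y (Finset.univ : Finset (Fin k)) := hy.injOn
  set P : F[X] := ∏ j : Fin k, (X - C (y j)) with hP
  set Q : F[X] := ∏ j : Fin k, (X - C (y j - 1)) with hQ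
  have hPm : P.Monic := monic_prod_of_monic _ _ fun j _ => monic_X_sub_C _
  have hQm : Q.Monic := monic_prod_of_monic _ _ fun j _ => monic_X_sub_C _
  have hPdeg : P.natDegree = k := by
    rw [hP, natDegree_prod_of_monic _ _ fun j _ => monic_X_sub_C _]
    simp only [natDegree_X_sub_C, Finset.sum_const, smul_eq_mul, mul_one,
      Finset.card_univ, Fintype.card_fin]
  have hQdeg : Q.natDegree = k := by
    rw [hQ, natDegree_prod_of_monic _ _ fun j _ => monic_X_sub_C _]
    simp only [natDegree_X_sub_C, Finset.sum_const, smul_eq_mul, mul_one,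
      Finset.card_univ, Fintype.card_fin]
  set f : F[X] := Q - P with hf
  have hdeg : f.degree < (Finset.univ : Finset (Fin k)).card := by
    have h1 : Q.degree = P.degree := by
      rw [degree_eq_natDegree hQm.ne_zero, degree_eq_natDegree hPm.ne_zero, hQdeg, hPdeg]
    have := degree_sub_lt h1 hQm.ne_zero (by rw [hQm.leadingCoeff, hPm.leadingCoeff])
    rw [degree_eq_natDegree hQm.ne_zero, hQdeg] at this
    simpa using this
  have hinterp := Lagrange.eq_interpolate (s := Finset.univ) (v := y) hvs hdeg
  -- evaluate f at nodes
  have heval : ∀ i : Fin k, f.eval (y i) = ∏ j ∈ Finset.univ.erase i, (y i - y j + 1) := by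
    intro i
    have hPe : P.eval (y i) = 0 := by
      rw [hP, eval_prod]
      exact Finset.prod_eq_zero (Finset.mem_univ i) (by simp)
    have hQe : Q.eval (y i) = ∏ j : Fin k, (y i - (y j - 1)) := by
      rw [hQ, eval_prod]; simp
    rw [hf, eval_sub, hPe, hQe, sub_zero,
      ← Finset.mul_prod_erase _ _ (Finset.mem_univ i)]
    have : y i - (y i - 1) = 1 := by ring
    rw [this, one_mul]
    exact Finset.prod_congr rfl fun j _ => by ring
  -- coefficient of basis polynomials
  have hbasis : ∀ i : Fin k,
      (Lagrange.basis Finset.univ y i).coeff (k - 1)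
        = ∏ j ∈ Finset.univ.erase i, (y i - y j)⁻¹ := by
    intro i
    have hnd : (Lagrange.basis Finset.univ y i).natDegree = k - 1 := by
      rw [Lagrange.natDegree_basis hvs (Finset.mem_univ i)]
      simp
    rw [← hnd, coeff_natDegree]
    unfold Lagrange.basis
    rw [leadingCoeff_prod]
    refine Finset.prod_congr rfl fun j hj => ?_
    unfold Lagrange.basisDivisor
    rw [leadingCoeff_mul, leadingCoeff_C, (monic_X_sub_C _).leadingCoeff, mul_one]
  -- coefficient of f directly
  have hcoefff : f.coeff (k - 1) = (k : F) := by
    have hQc : Q.coeff (k - 1) = ∑ j : Fin k, (1 - y j) := by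
      have h := Polynomial.Monic.nextCoeff_prod Finset.univ
        (fun j : Fin k => (X - C (y j - 1))) (fun j _ => monic_X_sub_C _)
      rw [← hQ, nextCoeff_of_natDegree_pos (by rw [hQdeg]; exact hk), hQdeg] at h
      rw [h]
      exact Finset.sum_congr rfl fun j _ => by rw [nextCoeff_X_sub_C]; ring
    have hPc : P.coeff (k - 1) = ∑ j : Fin k, (-(y j)) := by
      have h := Polynomial.Monic.nextCoeff_prod Finset.univ
        (fun j : Fin k => (X - C (y j))) (fun j _ => monic_X_sub_C _)
      rw [← hP, nextCoeff_of_natDegree_pos (by rw [hPdeg]; exact hk), hPdeg] at h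
      rw [h]
      exact Finset.sum_congr rfl fun j _ => by rw [nextCoeff_X_sub_C]
    rw [hf, coeff_sub, hQc, hPc]
    rw [← Finset.sum_sub_distrib]
    simp
  -- coefficient of the interpolant
  have hcoeffi : (Lagrange.interpolate Finset.univ y fun i => f.eval (y i)).coeff (k - 1)
      = ∑ m : Fin k, ∏ j ∈ Finset.univ.erase m, ((y m - y j + 1) / (y m - y j)) := by
    rw [Lagrange.interpolate_apply, finset_sum_coeff]
    refine Finset.sum_congr rfl fun i _ => ?_
    rw [coeff_C_mul, hbasis i, heval i, ← Finset.prod_mul_distrib]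
    exact Finset.prod_congr rfl fun j _ => (div_eq_mul_inv _ _).symm
  rw [← hcoeffi, ← hinterp, hcoefff]

/-- Main combinatorial identity: the symmetrization sum equals `k!`. -/
lemma lemB {F : Type*} [Field F] : ∀ (k : ℕ) (y : Fin k → F), Function.Injective y →
    ∑ σ : Equiv.Perm (Fin k), ∏ i : Fin k, ∏ j ∈ Finset.Ioi i,
      ((y (σ i) - y (σ j) + 1) / (y (σ i) - y (σ j))) = (Nat.factorial k : F) := by
  intro k
  induction k with
  | zero =>
      intro y hy
      simp [Nat.factorial]
  | succ n ih =>
      intro y hy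
      rw [← Equiv.sum_comp (Equiv.Perm.decomposeFin (n := n)).symm, Fintype.sum_prod_type]
      have hterm : ∀ (p : Fin (n + 1)) (e : Equiv.Perm (Fin n)),
          (∏ i : Fin (n+1), ∏ j ∈ Finset.Ioi i,
            ((y (Equiv.Perm.decomposeFin.symm (p, e) i)
              - y (Equiv.Perm.decomposeFin.symm (p, e) j) + 1)
            / (y (Equiv.Perm.decomposeFin.symm (p, e) i)
              - y (Equiv.Perm.decomposeFin.symm (p, e) j))))
          = (∏ t : Fin n, ((y p - y (Equiv.swap 0 p t.succ) + 1)
              / (y p - y (Equiv.swap 0 p t.succ))))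
            * ∏ i : Fin n, ∏ j ∈ Finset.Ioi i,
                (((y ∘ fun t : Fin n => Equiv.swap 0 p t.succ) (e i)
                  - (y ∘ fun t : Fin n => Equiv.swap 0 p t.succ) (e j) + 1)
                / ((y ∘ fun t : Fin n => Equiv.swap 0 p t.succ) (e i)
                  - (y ∘ fun t : Fin n => Equiv.swap 0 p t.succ) (e j))) := by
        intro p e
        rw [Fin.prod_univ_succ]
        congr 1
        · rw [Fin.prod_Ioi_zero]
          rw [← Equiv.prod_comp e (fun t : Fin n =>
            ((y p - y (Equiv.swap 0 p t.succ) + 1) / (y p - y (Equiv.swap 0 p t.succ))))]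
          exact Finset.prod_congr rfl fun t _ => by
            simp [Equiv.Perm.decomposeFin_symm_apply_zero,
              Equiv.Perm.decomposeFin_symm_apply_succ]
        · refine Finset.prod_congr rfl fun i _ => ?_
          rw [Fin.prod_Ioi_succ]
          exact Finset.prod_congr rfl fun j _ => by
            simp [Equiv.Perm.decomposeFin_symm_apply_succ]
      calc ∑ p : Fin (n+1), ∑ e : Equiv.Perm (Fin n), (∏ i : Fin (n+1), ∏ j ∈ Finset.Ioi i,
            ((y (Equiv.Perm.decomposeFin.symm (p, e) i)
              - y (Equiv.Perm.decomposeFin.symm (p, e) j) + 1)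
            / (y (Equiv.Perm.decomposeFin.symm (p, e) i)
              - y (Equiv.Perm.decomposeFin.symm (p, e) j))))
          = ∑ p : Fin (n+1), (∏ t : Fin n, ((y p - y (Equiv.swap 0 p t.succ) + 1)
              / (y p - y (Equiv.swap 0 p t.succ)))) * (Nat.factorial n : F) := by
            refine Finset.sum_congr rfl fun p _ => ?_
            rw [Finset.sum_congr rfl fun e _ => hterm p e, ← Finset.mul_sum]
            congr 1
            exact ih (y ∘ fun t : Fin n => Equiv.swap 0 p t.succ)
              (hy.comp ((Equiv.swap 0 p).injective.comp (Fin.succ_injective n)))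
        _ = (Nat.factorial (n+1) : F) := by
            have hA : ∀ p : Fin (n+1),
                (∏ t : Fin n, ((y p - y (Equiv.swap 0 p t.succ) + 1)
                  / (y p - y (Equiv.swap 0 p t.succ))))
                = ∏ b ∈ Finset.univ.erase p, ((y p - y b + 1) / (y p - y b)) := by
              intro p
              refine Finset.prod_bij (fun t _ => Equiv.swap 0 p t.succ) ?_ ?_ ?_ ?_
              · intro t _
                refine Finset.mem_erase.mpr ⟨?_, Finset.mem_univ _⟩
                intro h
                have : t.succ = (0 : Fin (n+1)) := by
                  have := congrArg (Equiv.swap 0 p) h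
                  simpa using this
                exact (Fin.succ_ne_zero t) this
              · intro a _ b _ h
                exact Fin.succ_injective n ((Equiv.swap 0 p).injective h)
              · intro b hb
                have hbp : b ≠ p := (Finset.mem_erase.mp hb).1
                have hc : Equiv.swap 0 p b ≠ 0 := by
                  intro h
                  apply hbp
                  have := congrArg (Equiv.swap 0 p) h
                  simpa using this
                obtain ⟨t, ht⟩ := Fin.exists_succ_eq.mpr hc
                refine ⟨t, Finset.mem_univ _, ?_⟩
                show Equiv.swap 0 p t.succ = b
                rw [ht]
                simp
              · intro t _
                rfl
            rw [Finset.sum_congr rfl fun p _ => congrArg (· * (Nat.factorial n : F)) (hA p),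
              ← Finset.sum_mul, lemA y hy]
            rw [Nat.factorial_succ, Nat.cast_mul]

/-- for every `k ≥ 1` and `r ∈ ℕ`,
`∑_{σ ∈ S_k} ∏_{s=1}^k x_{σ(s)}^r ∏_{1≤i<j≤k} (x_{σ(i)} − x_{σ(j)} + 1)/(x_{σ(i)} − x_{σ(j)})
  = k! · (x_1 ⋯ x_k)^r` in `ℚ(x_1,…,x_k)`; i.e. in the rank-1 shuffle algebra the `k`-th
shuffle power of `x_1^r` equals `k!·(x_1⋯x_k)^r`. -/
theorem stmt_1 (k : ℕ) (hk : 1 ≤ k) (r : ℕ) :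
    ∑ σ : Equiv.Perm (Fin k),
      (∏ s : Fin k, Xv k (σ s) ^ r) *
        ∏ i : Fin k, ∏ j ∈ Finset.Ioi i,
          (Xv k (σ i) - Xv k (σ j) + 1) / (Xv k (σ i) - Xv k (σ j))
    = (Nat.factorial k : FractionRing (MvPolynomial (Fin k) ℚ)) * (∏ i : Fin k, Xv k i) ^ r := by
  have hy : Function.Injective (Xv k) := by
    intro a b h
    exact MvPolynomial.X_injective
      (IsFractionRing.injective (MvPolynomial (Fin k) ℚ)
        (FractionRing (MvPolynomial (Fin k) ℚ)) h)
  have hσ : ∀ σ : Equiv.Perm (Fin k),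
      (∏ s : Fin k, Xv k (σ s) ^ r) = (∏ i : Fin k, Xv k i) ^ r := by
    intro σ
    rw [Equiv.prod_comp σ (fun s => Xv k s ^ r), Finset.prod_pow]
  calc ∑ σ : Equiv.Perm (Fin k),
      (∏ s : Fin k, Xv k (σ s) ^ r) *
        ∏ i : Fin k, ∏ j ∈ Finset.Ioi i,
          (Xv k (σ i) - Xv k (σ j) + 1) / (Xv k (σ i) - Xv k (σ j))
      = (∏ i : Fin k, Xv k i) ^ r * ∑ σ : Equiv.Perm (Fin k),
          ∏ i : Fin k, ∏ j ∈ Finset.Ioi i,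
            (Xv k (σ i) - Xv k (σ j) + 1) / (Xv k (σ i) - Xv k (σ j)) := by
        rw [Finset.mul_sum]
        exact Finset.sum_congr rfl fun σ _ => by rw [hσ σ]
    _ = (Nat.factorial k : FractionRing (MvPolynomial (Fin k) ℚ)) * (∏ i : Fin k, Xv k i) ^ r := by
        rw [lemB k (Xv k) hy, mul_comm]
end

section
/- For every partition λ = (λ_1 ≥ ⋯ ≥ λ_k) of length k, the symmetric polynomial P_λ − m_λ ∈ ℤ[x_1,…,x_k] has total degree strictly less than |λ| (it is zero if |λ| = 0). Equivalently, P_λ = m_λ + ∑_{μ, |μ|<|λ|} a_{λμ} m_μ with integer coefficients a_{λμ}. -/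
open scoped BigOperators

/-- The variable `x_i` viewed inside the fraction field of `ℤ[x_1, …, x_k]`. -/
noncomputable def Xz (k : ℕ) (i : Fin k) : FractionRing (MvPolynomial (Fin k) ℤ) :=
  algebraMap (MvPolynomial (Fin k) ℤ) (FractionRing (MvPolynomial (Fin k) ℤ)) (MvPolynomial.X i)

/-- `mul(λ) = ∏_i m_i(λ)!`, where `m_i(λ)` is the number of parts of `λ` equal to `i`. -/
def mulOf (k : ℕ) (lam : Fin k → ℕ) : ℕ :=
  ∏ i ∈ Finset.image lam Finset.univ,
    (Finset.univ.filter (fun s => lam s = i)).card.factorial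

/-- The symmetrization
`∑_{σ ∈ S_k} ∏_s x_{σ(s)}^{λ_s} · ∏_{1≤i<j≤k} (x_{σ(i)} − x_{σ(j)} + 1)/(x_{σ(i)} − x_{σ(j)})`,
an element of the fraction field of `ℤ[x_1, …, x_k]`; it equals `mul(λ) · P_λ` where `P_λ` is
the Hall–Littlewood polynomial. -/
noncomputable def hlSum (k : ℕ) (lam : Fin k → ℕ) : FractionRing (MvPolynomial (Fin k) ℤ) :=
  ∑ σ : Equiv.Perm (Fin k),
    (∏ s : Fin k, Xz k (σ s) ^ lam s) *
      ∏ i : Fin k, ∏ j ∈ Finset.Ioi i,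
        (Xz k (σ i) - Xz k (σ j) + 1) / (Xz k (σ i) - Xz k (σ j))

/-!
Clear denominators. Put `V_σ = ∏_{i<j} (x_{σ i} - x_{σ j})`, `W_σ = ∏_{i<j} (x_{σ i} - x_{σ j} + 1)`
and `D = ∏_τ V_τ`. Then `mul(λ) · (P_λ - m_λ) · D = ∑_σ x^{σ λ} (W_σ - V_σ) ∏_{τ ≠ σ} V_τ`.
Since `V_σ` is a nonzero product of linear forms, `W_σ - V_σ` has degree below `deg V_σ`. So the
right-hand side has degree below `|λ| + deg D`. Total degree is additive over the domain `ℤ[x]`,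
so `deg (P_λ - m_λ) < |λ|`.
-/

open MvPolynomial Finset

namespace MvPolynomial

variable {σ R ι : Type*} [CommRing R]

theorem totalDegree_prod_add_one_sub_prod_lt {s : Finset ι} (hs : s.Nonempty)
    {f : ι → MvPolynomial σ R} (hf : ∀ i ∈ s, (f i).totalDegree ≤ 1) :
    (∏ i ∈ s, (f i + 1) - ∏ i ∈ s, f i).totalDegree < #s := by
  classical
  have hexpand :
      ∏ i ∈ s, (f i + 1) - ∏ i ∈ s, f i = ∑ t ∈ s.powerset.erase s, ∏ i ∈ t, f i := by
    rw [prod_add_one, sum_erase_eq_sub (mem_powerset_self s)]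
  rw [hexpand]
  refine lt_of_le_of_lt (totalDegree_finsetSum_le (d := #s - 1) fun t ht => ?_)
    (Nat.sub_lt hs.card_pos one_pos)
  obtain ⟨hts, ht⟩ := mem_erase.1 ht
  have hcard : #t < #s := card_lt_card (ssubset_of_subset_of_ne (mem_powerset.1 ht) hts)
  calc (∏ i ∈ t, f i).totalDegree ≤ ∑ i ∈ t, (f i).totalDegree := totalDegree_finsetProd _ _
    _ ≤ ∑ _i ∈ t, 1 := sum_le_sum fun i hi => hf i (mem_powerset.1 ht hi)
    _ ≤ #s - 1 := by rw [sum_const, smul_eq_mul, mul_one]; omega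

theorem eq_zero_or_totalDegree_lt_sum {s : Finset ι} {f : ι → MvPolynomial σ R} {n : ℕ}
    (hf : ∀ i ∈ s, f i = 0 ∨ (f i).totalDegree < n) :
    ∑ i ∈ s, f i = 0 ∨ (∑ i ∈ s, f i).totalDegree < n := by
  rcases Nat.eq_zero_or_pos n with rfl | hn
  · exact .inl (sum_eq_zero fun i hi => (hf i hi).resolve_right (Nat.not_lt_zero _))
  · refine .inr (lt_of_le_of_lt (totalDegree_finsetSum_le (d := n - 1) fun i hi => ?_) (by omega))
    rcases hf i hi with h | h
    · simp [h]
    · omega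

theorem eq_zero_or_totalDegree_lt_of_mul [IsDomain R] {p q : MvPolynomial σ R} {n : ℕ}
    (hq : q ≠ 0) (h : p * q = 0 ∨ (p * q).totalDegree < n + q.totalDegree) :
    p = 0 ∨ p.totalDegree < n := by
  rcases eq_or_ne p 0 with hp | hp
  · exact .inl hp
  · rw [totalDegree_mul_of_isDomain hp hq, mul_eq_zero, or_iff_right hp, or_iff_right hq] at h
    exact .inr (by omega)

theorem X_sub_X_ne_zero [Nontrivial R] {a b : σ} (h : a ≠ b) :
    (X a - X b : MvPolynomial σ R) ≠ 0 :=
  sub_ne_zero.2 fun hab => h (X_injective hab)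

end MvPolynomial

theorem Finset.sum_div_mul_prod {ι K : Type*} [Field K] [DecidableEq ι] (s : Finset ι)
    (a b : ι → K) (hb : ∀ i ∈ s, b i ≠ 0) :
    (∑ i ∈ s, a i / b i) * ∏ i ∈ s, b i = ∑ i ∈ s, a i * ∏ j ∈ s.erase i, b j := by
  rw [sum_mul]
  refine sum_congr rfl fun i hi => ?_
  rw [← mul_prod_erase s b hi, ← mul_assoc, div_mul_cancel₀ _ (hb i hi)]

namespace HallLittlewood

variable (k : ℕ)

noncomputable def diffProd (σ : Equiv.Perm (Fin k)) : MvPolynomial (Fin k) ℤ :=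
  ∏ i : Fin k, ∏ j ∈ Ioi i, (X (σ i) - X (σ j))

noncomputable def diffAddOneProd (σ : Equiv.Perm (Fin k)) : MvPolynomial (Fin k) ℤ :=
  ∏ i : Fin k, ∏ j ∈ Ioi i, (X (σ i) - X (σ j) + 1)

noncomputable def permMonomial (lam : Fin k → ℕ) (σ : Equiv.Perm (Fin k)) :
    MvPolynomial (Fin k) ℤ :=
  ∏ s : Fin k, X (σ s) ^ lam s

variable {k}

theorem diffProd_ne_zero (σ : Equiv.Perm (Fin k)) : diffProd k σ ≠ 0 :=
  prod_ne_zero_iff.2 fun _ _ => prod_ne_zero_iff.2 fun _ hj =>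
    X_sub_X_ne_zero (σ.injective.ne (mem_Ioi.1 hj).ne)

theorem diffAddOneProd_sub_diffProd_eq_zero_or_totalDegree_lt (σ : Equiv.Perm (Fin k)) :
    diffAddOneProd k σ - diffProd k σ = 0 ∨
      (diffAddOneProd k σ - diffProd k σ).totalDegree < (diffProd k σ).totalDegree := by
  set pairs := (univ : Finset (Fin k)).sigma fun i => Ioi i
  set f : (_ : Fin k) × Fin k → MvPolynomial (Fin k) ℤ := fun p => X (σ p.1) - X (σ p.2)
  have hV : diffProd k σ = ∏ p ∈ pairs, f p := prod_sigma' _ _ _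
  have hW : diffAddOneProd k σ = ∏ p ∈ pairs, (f p + 1) := prod_sigma' _ _ _
  rcases pairs.eq_empty_or_nonempty with hempty | hne
  · simp [hV, hW, hempty]
  right
  have hhom : ∀ p ∈ pairs, (f p).IsHomogeneous 1 := fun p _ =>
    (isHomogeneous_X _ _).sub (isHomogeneous_X _ _)
  have hdeg : (diffProd k σ).totalDegree = #pairs := by
    have := IsHomogeneous.prod pairs f (fun _ => 1) hhom
    rw [sum_const, smul_eq_mul, mul_one, ← hV] at this
    exact this.totalDegree (diffProd_ne_zero σ)
  rw [hdeg, hV, hW]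
  exact totalDegree_prod_add_one_sub_prod_lt hne fun p hp => (hhom p hp).totalDegree_le

theorem hlSum_eq_sum_div (lam : Fin k → ℕ) :
    hlSum k lam = ∑ σ : Equiv.Perm (Fin k),
      algebraMap _ (FractionRing _) (permMonomial k lam σ * diffAddOneProd k σ) /
        algebraMap _ (FractionRing _) (diffProd k σ) := by
  refine sum_congr rfl fun σ _ => ?_
  simp only [permMonomial, diffAddOneProd, diffProd, map_mul, map_prod, map_pow, map_add,
    map_sub, map_one, mul_div_assoc, prod_div_distrib, Xz]

theorem sub_mul_prod_diffProd_eq_sum (lam : Fin k → ℕ) {P M : MvPolynomial (Fin k) ℤ}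
    (hP : hlSum k lam
        = (mulOf k lam : FractionRing (MvPolynomial (Fin k) ℤ)) *
            algebraMap (MvPolynomial (Fin k) ℤ) (FractionRing (MvPolynomial (Fin k) ℤ)) P)
    (hM : ∑ σ : Equiv.Perm (Fin k), ∏ s : Fin k,
            (MvPolynomial.X (σ s) : MvPolynomial (Fin k) ℤ) ^ lam s
          = (mulOf k lam : MvPolynomial (Fin k) ℤ) * M) :
    (P - M) * (mulOf k lam * ∏ τ, diffProd k τ) = ∑ σ, permMonomial k lam σ *
      (diffAddOneProd k σ - diffProd k σ) * ∏ τ ∈ univ.erase σ, diffProd k τ := by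
  classical
  have hPD : mulOf k lam * P * ∏ τ, diffProd k τ = ∑ σ, permMonomial k lam σ *
      diffAddOneProd k σ * ∏ τ ∈ univ.erase σ, diffProd k τ := by
    apply IsFractionRing.injective _ (FractionRing (MvPolynomial (Fin k) ℤ))
    rw [map_mul, map_mul, map_natCast, ← hP, hlSum_eq_sum_div, map_prod,
      sum_div_mul_prod _ _ _ fun σ _ => ?_]
    · simp only [map_sum, map_mul, map_prod]
    · exact (map_ne_zero_iff _ (IsFractionRing.injective _ _)).2 (diffProd_ne_zero σ)
  have hMD : mulOf k lam * M * ∏ τ, diffProd k τ = ∑ σ, permMonomial k lam σ *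
      diffProd k σ * ∏ τ ∈ univ.erase σ, diffProd k τ := by
    simp only [← hM, sum_mul, mul_assoc, mul_prod_erase _ _ (mem_univ _), permMonomial]
  simp only [mul_sub, sub_mul, sum_sub_distrib]
  linear_combination hPD - hMD

theorem permMonomial_totalDegree_le (lam : Fin k → ℕ) (σ : Equiv.Perm (Fin k)) :
    (permMonomial k lam σ).totalDegree ≤ ∑ s, lam s :=
  (totalDegree_finsetProd _ _).trans <| sum_le_sum fun s _ => by
    rw [totalDegree_X_pow]

theorem eq_zero_or_totalDegree_permMonomial_mul_lt (lam : Fin k → ℕ) (σ : Equiv.Perm (Fin k)) :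
    permMonomial k lam σ * (diffAddOneProd k σ - diffProd k σ) *
        ∏ τ ∈ univ.erase σ, diffProd k τ = 0 ∨
      (permMonomial k lam σ * (diffAddOneProd k σ - diffProd k σ) *
        ∏ τ ∈ univ.erase σ, diffProd k τ).totalDegree <
          ∑ s, lam s + (∏ τ, diffProd k τ).totalDegree := by
  classical
  rcases diffAddOneProd_sub_diffProd_eq_zero_or_totalDegree_lt σ with h | h
  · simp [h]
  right
  have hD : (∏ τ, diffProd k τ).totalDegree =
      (diffProd k σ).totalDegree + (∏ τ ∈ univ.erase σ, diffProd k τ).totalDegree := by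
    rw [← mul_prod_erase _ _ (mem_univ σ), totalDegree_mul_of_isDomain (diffProd_ne_zero σ)
      (prod_ne_zero_iff.2 fun τ _ => diffProd_ne_zero τ)]
  calc _ ≤ (permMonomial k lam σ * (diffAddOneProd k σ - diffProd k σ)).totalDegree +
        (∏ τ ∈ univ.erase σ, diffProd k τ).totalDegree := totalDegree_mul _ _
    _ ≤ (permMonomial k lam σ).totalDegree + (diffAddOneProd k σ - diffProd k σ).totalDegree +
        (∏ τ ∈ univ.erase σ, diffProd k τ).totalDegree := by grw [totalDegree_mul]
    _ < ∑ s, lam s + (∏ τ, diffProd k τ).totalDegree := by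
        grw [permMonomial_totalDegree_le lam σ, hD]
        omega

end HallLittlewood

open HallLittlewood in
theorem stmt_3_general (k : ℕ) (lam : Fin k → ℕ)
    (P M : MvPolynomial (Fin k) ℤ)
    (hP : hlSum k lam
        = (mulOf k lam : FractionRing (MvPolynomial (Fin k) ℤ)) *
            algebraMap (MvPolynomial (Fin k) ℤ) (FractionRing (MvPolynomial (Fin k) ℤ)) P)
    (hM : ∑ σ : Equiv.Perm (Fin k), ∏ s : Fin k,
            (MvPolynomial.X (σ s) : MvPolynomial (Fin k) ℤ) ^ lam s
          = (mulOf k lam : MvPolynomial (Fin k) ℤ) * M) :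
    P - M = 0 ∨ (P - M).totalDegree < ∑ s : Fin k, lam s := by
  have hmul : (mulOf k lam : MvPolynomial (Fin k) ℤ) ≠ 0 :=
    Nat.cast_ne_zero.2 (prod_ne_zero_iff.2 fun _ _ => Nat.factorial_ne_zero _)
  have hD : ∏ τ, diffProd k τ ≠ 0 := prod_ne_zero_iff.2 fun τ _ => diffProd_ne_zero τ
  refine eq_zero_or_totalDegree_lt_of_mul (mul_ne_zero hmul hD) ?_
  rw [sub_mul_prod_diffProd_eq_sum lam hP hM, totalDegree_mul_of_isDomain hmul hD, ← map_natCast C,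
    totalDegree_C, zero_add]
  exact eq_zero_or_totalDegree_lt_sum fun σ _ =>
    eq_zero_or_totalDegree_permMonomial_mul_lt lam σ

/-- for every partition `λ` of length `k`, writing `P` for the Hall–Littlewood
polynomial `P_λ` (characterized by `mul(λ)·P_λ = hlSum λ` in the fraction field) and `M` for
the monomial symmetric polynomial `m_λ` (characterized by
`mul(λ)·m_λ = ∑_{σ ∈ S_k} ∏_s x_{σ(s)}^{λ_s}`), the difference `P_λ − m_λ` is either zero or
has total degree strictly less than `|λ| = λ_1 + ⋯ + λ_k`. -/
theorem stmt_3 (k : ℕ) (lam : Fin k → ℕ) (hlam : Antitone lam)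
    (P M : MvPolynomial (Fin k) ℤ)
    (hP : hlSum k lam
        = (mulOf k lam : FractionRing (MvPolynomial (Fin k) ℤ)) *
            algebraMap (MvPolynomial (Fin k) ℤ) (FractionRing (MvPolynomial (Fin k) ℤ)) P)
    (hM : ∑ σ : Equiv.Perm (Fin k), ∏ s : Fin k,
            (MvPolynomial.X (σ s) : MvPolynomial (Fin k) ℤ) ^ lam s
          = (mulOf k lam : MvPolynomial (Fin k) ℤ) * M) :
    P - M = 0 ∨ (P - M).totalDegree < ∑ s : Fin k, lam s :=
  stmt_3_general k lam P M hP hM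
end

section
/- For every k ∈ ℕ, the family {P_λ : λ a partition of length k} is a basis of the ℤ-module of symmetric polynomials in ℤ[x_1,…,x_k]: the P_λ are linearly independent over ℤ and every symmetric polynomial with integer coefficients in k variables is a ℤ-linear combination of them. -/
open scoped BigOperators

/-!
Multiplying `hlSum λ` by the Vandermonde product `V = ∏_{i<j} (x_i - x_j)` turns it into the
alternant `∑_σ sign σ · σ(x^λ ∏_{i<j} (x_i - x_j + 1))`, so `V · mul(λ) · P_λ` equals this
alternant in `ℤ[x]`. For the lexicographic monomial order, the leading term of `σ(∏ (x_i - x_j + 1))` is that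
of `σ V = sign σ · V`, so the `σ`-summand has leading exponent `σλ + deg V`; since `λ` is antitone,
`σλ ≤ λ` lexicographically, with equality exactly for the `mul(λ)` permutations fixing `λ`. Hence
`P_λ` is monic with leading exponent `λ`, and it is symmetric because `V` and the alternant are both
antisymmetric. The leading exponent of a symmetric polynomial is antitone, so subtracting multiples
of the `P_λ` (triangularity) gives spanning, and distinct leading exponents give independence.
-/

open Finset MvPolynomial MonomialOrder Equiv

theorem Pi.toLex_comp_perm_le_of_antitone {n : ℕ} {α : Type*} [LinearOrder α] {f : Fin n → α}
    (hf : Antitone f) (σ : Perm (Fin n)) : toLex (f ∘ σ) ≤ toLex f := by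
  -- bubble-sorting `f ∘ σ` into decreasing order only increases it, and ends at `f`
  set g : Fin n → αᵒᵈ := OrderDual.toDual ∘ f ∘ σ
  have hsorted : toLex (f ∘ σ) ≤ toLex (f ∘ (σ * Tuple.sort g)) := by
    refine Tuple.bubble_sort_induction
      (P := fun h => toLex (f ∘ σ) ≤ toLex (OrderDual.ofDual ∘ h)) le_rfl
      fun h i j hij hji hle => hle.trans ?_
    have := Pi.lex_desc (f := OrderDual.ofDual ∘ h ∘ swap i j) hij.le (by simpa using hji)
    rw [Function.comp_assoc, Function.comp_assoc, ← Perm.coe_mul, swap_mul_self,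
      Perm.coe_one, Function.comp_id] at this
    exact this.le
  have hanti : Antitone (f ∘ (σ * Tuple.sort g)) := (Tuple.monotone_sort g).dual_right
  rwa [Tuple.unique_antitone (τ := 1) hanti hf, Perm.coe_one, Function.comp_id] at hsorted

theorem Finsupp.toLex_mapDomain_perm_le_of_antitone {n : ℕ} {N : Type*} [AddCommMonoid N]
    [LinearOrder N] {d : Fin n →₀ N} (hd : Antitone ⇑d) (σ : Perm (Fin n)) :
    toLex (d.mapDomain σ) ≤ toLex d := by
  have hcoe : ⇑(d.mapDomain σ) = ⇑d ∘ σ.symm :=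
    funext fun _ => Finsupp.mapDomain_equiv_apply _ _
  rcases (Pi.toLex_comp_perm_le_of_antitone hd σ.symm).lt_or_eq with hlt | heq
  · exact le_of_lt (by rw [← hcoe] at hlt; exact hlt)
  · exact le_of_eq (congrArg toLex (DFunLike.coe_injective (hcoe.trans heq)))

namespace MonomialOrder

variable {σ R : Type*} {m : MonomialOrder σ}

section CommSemiring

variable [CommSemiring R]

theorem leadingTerm_add_of_lt {f g : MvPolynomial σ R} (h : m.degree g ≺[m] m.degree f) :
    m.leadingTerm (f + g) = m.leadingTerm f :=
  leadingTerm_eq_leadingTerm_iff.2 ⟨leadingCoeff_add_of_lt h, degree_add_of_lt h⟩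

theorem leadingTerm_prod [NoZeroDivisors R] {ι : Type*} (s : Finset ι)
    (f : ι → MvPolynomial σ R) :
    m.leadingTerm (∏ i ∈ s, f i) = ∏ i ∈ s, m.leadingTerm (f i) := by
  classical
  induction s using Finset.induction_on with
  | empty => simp [leadingTerm]
  | insert i s hi ih => rw [prod_insert hi, prod_insert hi, leadingTerm_mul, ih]

end CommSemiring

section CommRing

variable [CommRing R]

theorem degree_units_int_smul (u : ℤˣ) (f : MvPolynomial σ R) :
    m.degree (u • f) = m.degree f := by
  rcases Int.units_eq_one_or u with rfl | rfl <;> simp [degree_neg]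

theorem leadingCoeff_units_int_smul (u : ℤˣ) (f : MvPolynomial σ R) :
    m.leadingCoeff (u • f) = u • m.leadingCoeff f := by
  rcases Int.units_eq_one_or u with rfl | rfl <;> simp [leadingCoeff_neg]

theorem degree_X_sub_X_ne_zero [Nontrivial R] {a b : σ} (hab : a ≠ b) :
    m.degree (X a - X b : MvPolynomial σ R) ≠ 0 := by
  intro h
  have hC := eq_C_of_degree_eq_zero h
  rw [leadingCoeff, h, coeff_sub, coeff_zero_X, coeff_zero_X, sub_self, C_0, sub_eq_zero] at hC
  exact hab (X_injective hC)

theorem leadingTerm_X_sub_X_add_one [Nontrivial R] {a b : σ} (hab : a ≠ b) :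
    m.leadingTerm (X a - X b + 1 : MvPolynomial σ R) = m.leadingTerm (X a - X b) :=
  leadingTerm_add_of_lt <| by
    rw [degree_one, map_zero, toSyn_lt_iff_ne_zero, Ne, toSyn_eq_zero_iff]
    exact degree_X_sub_X_ne_zero hab

theorem linearIndependent_of_monic_of_injective_degree {ι : Type*} {v : ι → MvPolynomial σ R}
    (hmonic : ∀ i, m.Monic (v i)) (hdeg : Function.Injective (m.degree ∘ v)) :
    LinearIndependent R v := by
  classical
  rw [linearIndependent_iff']
  intro s g hsum i hi
  by_contra hgi
  obtain ⟨i₀, hi₀, hmax⟩ :=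
    (s.filter (g · ≠ 0)).exists_max_image (m.toSyn ∘ m.degree ∘ v) ⟨i, mem_filter.2 ⟨hi, hgi⟩⟩
  have hcoeff : (∑ j ∈ s, g j • v j).coeff (m.degree (v i₀)) = g i₀ := by
    rw [coeff_sum, sum_eq_single_of_mem i₀ (mem_filter.1 hi₀).1]
    · rw [coeff_smul, ← leadingCoeff, (hmonic i₀).leadingCoeff_eq_one, smul_eq_mul, mul_one]
    · intro j hj hji₀
      by_cases hgj : g j = 0
      · rw [hgj, zero_smul, coeff_zero]
      have hlt : m.degree (v j) ≺[m] m.degree (v i₀) :=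
        (hmax j (mem_filter.2 ⟨hj, hgj⟩)).lt_of_ne fun h => hji₀ (hdeg (m.toSyn.injective h))
      rw [coeff_smul, coeff_eq_zero_of_lt hlt, smul_zero]
  rw [hsum, coeff_zero] at hcoeff
  exact (mem_filter.1 hi₀).2 hcoeff.symm

theorem le_span_of_forall_exists_monic_degree_eq {ι : Type*} {M : Submodule R (MvPolynomial σ R)}
    {v : ι → MvPolynomial σ R}
    (hv : ∀ f ∈ M, f ≠ 0 → ∃ i, v i ∈ M ∧ m.Monic (v i) ∧ m.degree (v i) = m.degree f) :
    M ≤ Submodule.span R (Set.range v) := by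
  intro f hf
  induction hd : m.toSyn (m.degree f) using WellFoundedLT.induction generalizing f with
  | _ d ih =>
  by_cases hf0 : f = 0
  · simp [hf0]
  obtain ⟨i, hiM, hmonic, hdeg⟩ := hv f hf hf0
  set g := f - m.leadingCoeff f • v i
  have hfg : f = g + m.leadingCoeff f • v i := (sub_add_cancel _ _).symm
  have hvi : m.leadingCoeff f • v i ∈ Submodule.span R (Set.range v) :=
    Submodule.smul_mem _ _ (Submodule.subset_span ⟨i, rfl⟩)
  by_cases hg0 : g = 0
  · rw [hfg, hg0, zero_add]; exact hvi
  have hle : m.degree g ≼[m] m.degree f :=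
    degree_sub_le.trans (sup_le le_rfl (degree_smul_le.trans_eq (congrArg m.toSyn hdeg)))
  have hne : m.degree g ≠ m.degree f := by
    intro h
    apply hg0
    rw [← coeff_degree_eq_zero_iff, h, coeff_sub, coeff_smul, ← hdeg, ← leadingCoeff,
      hmonic.leadingCoeff_eq_one, smul_eq_mul, mul_one, hdeg, leadingCoeff, sub_self]
  have hlt : m.toSyn (m.degree g) < d := hd ▸ hle.lt_of_ne (m.toSyn.injective.ne hne)
  rw [hfg]
  exact Submodule.add_mem _ (ih _ hlt (M.sub_mem hf (M.smul_mem _ hiM)) rfl) hvi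

end CommRing

end MonomialOrder

theorem MvPolynomial.IsSymmetric.antitone_lex_degree {σ R : Type*} [CommSemiring R]
    [LinearOrder σ] [WellFoundedGT σ] {f : MvPolynomial σ R} (hf : f.IsSymmetric) :
    Antitone ⇑(lex.degree f) :=
  hf.antitone_supDegree

theorem Finset.prod_prod_Ioi_sub_comp_perm {n : ℕ} {R : Type*} [CommRing R] (v : Fin n → R)
    (σ : Perm (Fin n)) :
    ∏ i, ∏ j ∈ Ioi i, (v (σ i) - v (σ j)) = Perm.sign σ * ∏ i, ∏ j ∈ Ioi i, (v i - v j) := by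
  have hdet (w : Fin n → R) :
      ∏ i, ∏ j ∈ Ioi i, (w i - w j) = (Matrix.vandermonde (-w)).det := by
    simp [Matrix.det_vandermonde, neg_add_eq_sub]
  rw [hdet, hdet, ← Matrix.det_permute]
  rfl

namespace HallLittlewood

variable {k : ℕ} {R : Type*} [CommRing R]

variable (k R) in
noncomputable def vandermonde : MvPolynomial (Fin k) R := ∏ i, ∏ j ∈ Ioi i, (X i - X j)

variable (k R) in
noncomputable def shiftedVandermonde : MvPolynomial (Fin k) R :=
  ∏ i, ∏ j ∈ Ioi i, (X i - X j + 1)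

noncomputable def hlNumerator (d : Fin k →₀ ℕ) : MvPolynomial (Fin k) R :=
  monomial d 1 * shiftedVandermonde k R

noncomputable def alternant (f : MvPolynomial (Fin k) R) : MvPolynomial (Fin k) R :=
  ∑ σ : Perm (Fin k), Perm.sign σ • rename σ f

theorem rename_vandermonde (σ : Perm (Fin k)) :
    rename σ (vandermonde k R) = Perm.sign σ • vandermonde k R := by
  simp only [vandermonde, map_prod, map_sub, rename_X]
  rw [prod_prod_Ioi_sub_comp_perm (fun i => (X i : MvPolynomial (Fin k) R)), Units.smul_def,
    zsmul_eq_mul]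

theorem rename_alternant (τ : Perm (Fin k)) (f : MvPolynomial (Fin k) R) :
    rename τ (alternant f) = Perm.sign τ • alternant f := by
  simp only [alternant, map_sum, Units.smul_def, map_zsmul, rename_rename, smul_sum]
  refine Fintype.sum_equiv (Equiv.mulLeft τ) _ _ fun σ => ?_
  rw [coe_mulLeft, Perm.sign_mul, ← mul_smul, ← Units.val_mul, ← mul_assoc, Int.units_mul_self,
    one_mul, Perm.coe_mul]

section IsDomain

variable [IsDomain R] {m : MonomialOrder (Fin k)}

theorem vandermonde_ne_zero : vandermonde k R ≠ 0 :=
  prod_ne_zero_iff.2 fun _ _ => prod_ne_zero_iff.2 fun _ hj =>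
    sub_ne_zero.2 (X_injective.ne (mem_Ioi.1 hj).ne)

theorem isSymmetric_of_vandermonde_mul_eq_alternant {p f : MvPolynomial (Fin k) R}
    (h : vandermonde k R * p = alternant f) : p.IsSymmetric := by
  intro τ
  have hτ := congrArg (rename τ) h
  rw [map_mul, rename_vandermonde, rename_alternant, ← h, smul_mul_assoc] at hτ
  exact mul_left_cancel₀ vandermonde_ne_zero (MulAction.injective _ hτ)

theorem leadingTerm_rename_shiftedVandermonde (σ : Perm (Fin k)) :
    m.leadingTerm (rename σ (shiftedVandermonde k R)) =
      m.leadingTerm (rename σ (vandermonde k R)) := by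
  simp only [shiftedVandermonde, vandermonde, map_prod, map_add, map_sub, map_one, rename_X,
    leadingTerm_prod]
  exact prod_congr rfl fun i _ => prod_congr rfl fun j hj =>
    leadingTerm_X_sub_X_add_one (σ.injective.ne (mem_Ioi.1 hj).ne)

theorem degree_rename_shiftedVandermonde (σ : Perm (Fin k)) :
    m.degree (rename σ (shiftedVandermonde k R)) = m.degree (vandermonde k R) := by
  rw [(leadingTerm_eq_leadingTerm_iff.1 (leadingTerm_rename_shiftedVandermonde σ)).2,
    rename_vandermonde, degree_units_int_smul]

theorem leadingCoeff_rename_shiftedVandermonde (σ : Perm (Fin k)) :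
    m.leadingCoeff (rename σ (shiftedVandermonde k R)) =
      Perm.sign σ • m.leadingCoeff (vandermonde k R) := by
  rw [(leadingTerm_eq_leadingTerm_iff.1 (leadingTerm_rename_shiftedVandermonde σ)).1,
    rename_vandermonde, leadingCoeff_units_int_smul]

theorem degree_rename_hlNumerator (d : Fin k →₀ ℕ) (σ : Perm (Fin k)) :
    m.degree (rename σ (hlNumerator d : MvPolynomial (Fin k) R)) =
      d.mapDomain σ + m.degree (vandermonde k R) := by
  classical
  have hW : rename σ (shiftedVandermonde k R) ≠ 0 := by
    rw [← leadingCoeff_ne_zero_iff (m := m), leadingCoeff_rename_shiftedVandermonde,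
      smul_ne_zero_iff_ne, leadingCoeff_ne_zero_iff]
    exact vandermonde_ne_zero
  rw [hlNumerator, map_mul, rename_monomial, degree_mul (monomial_eq_zero.not.2 one_ne_zero) hW,
    degree_monomial, if_neg one_ne_zero, degree_rename_shiftedVandermonde]

theorem leadingCoeff_rename_hlNumerator (d : Fin k →₀ ℕ) (σ : Perm (Fin k)) :
    m.leadingCoeff (rename σ (hlNumerator d : MvPolynomial (Fin k) R)) =
      Perm.sign σ • m.leadingCoeff (vandermonde k R) := by
  rw [hlNumerator, map_mul, rename_monomial, leadingCoeff_mul, leadingCoeff_monomial, one_mul,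
    leadingCoeff_rename_shiftedVandermonde]

theorem coeff_rename_hlNumerator {d : Fin k →₀ ℕ} (hd : Antitone ⇑d) (σ : Perm (Fin k)) :
    (rename σ (hlNumerator d : MvPolynomial (Fin k) R)).coeff
        (d + lex.degree (vandermonde k R)) =
      if d.mapDomain σ = d then Perm.sign σ • lex.leadingCoeff (vandermonde k R) else 0 := by
  split_ifs with hσ
  · rw [← leadingCoeff_rename_hlNumerator d σ, leadingCoeff,
      degree_rename_hlNumerator (m := lex), hσ]
  · apply coeff_eq_zero_of_lt
    rw [degree_rename_hlNumerator (m := lex), lex_lt_iff, toLex_add, toLex_add]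
    have := (Finsupp.toLex_mapDomain_perm_le_of_antitone hd σ).lt_of_ne (toLex.injective.ne hσ)
    exact add_lt_add_left this _

theorem coeff_alternant_hlNumerator {d : Fin k →₀ ℕ} (hd : Antitone ⇑d) :
    (alternant (hlNumerator d : MvPolynomial (Fin k) R)).coeff
        (d + lex.degree (vandermonde k R)) =
      #{σ : Perm (Fin k) | d.mapDomain σ = d} • lex.leadingCoeff (vandermonde k R) := by
  rw [alternant, coeff_sum]
  simp only [coeff_smul, coeff_rename_hlNumerator hd, smul_ite, smul_smul, Int.units_mul_self,
    one_smul, smul_zero]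
  rw [sum_ite, sum_const_zero, add_zero, sum_const]

theorem degree_alternant_hlNumerator_le {d : Fin k →₀ ℕ} (hd : Antitone ⇑d) :
    lex.degree (alternant (hlNumerator d : MvPolynomial (Fin k) R)) ≼[lex]
      d + lex.degree (vandermonde k R) := by
  refine degree_sum_le.trans (Finset.sup_le fun σ _ => ?_)
  rw [degree_units_int_smul, degree_rename_hlNumerator (m := lex), lex_le_iff,
    toLex_add, toLex_add]
  exact add_le_add_left (Finsupp.toLex_mapDomain_perm_le_of_antitone hd σ) _

theorem degree_and_leadingCoeff_of_vandermonde_mul_eq_alternant [CharZero R] {d : Fin k →₀ ℕ}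
    (hd : Antitone ⇑d) {p : MvPolynomial (Fin k) R}
    (h : vandermonde k R * p = alternant (hlNumerator d)) :
    lex.degree p = d ∧ lex.leadingCoeff p = #{σ : Perm (Fin k) | d.mapDomain σ = d} := by
  set D := lex.degree (vandermonde k R)
  have hV : vandermonde k R ≠ 0 := vandermonde_ne_zero
  have hlcV : lex.leadingCoeff (vandermonde k R) ≠ 0 := leadingCoeff_ne_zero_iff.2 hV
  have hcoeff : (alternant (hlNumerator d : MvPolynomial (Fin k) R)).coeff (d + D) ≠ 0 := by
    rw [coeff_alternant_hlNumerator hd, nsmul_eq_mul]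
    exact mul_ne_zero (Nat.cast_ne_zero.2 (card_ne_zero.2 ⟨1, by simp⟩)) hlcV
  have hdegA : lex.degree (alternant (hlNumerator d : MvPolynomial (Fin k) R)) = d + D :=
    lex.toSyn.injective <| le_antisymm (degree_alternant_hlNumerator_le hd)
      (le_degree (mem_support_iff.2 hcoeff))
  have hp : p ≠ 0 := by
    rintro rfl
    rw [mul_zero] at h
    exact hcoeff (by rw [← h, coeff_zero])
  have hdeg : lex.degree p = d := by
    have := degree_mul (m := lex) hV hp
    rw [h, hdegA, add_comm d] at this
    exact (add_left_cancel this).symm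
  refine ⟨hdeg, ?_⟩
  have hlc := leadingCoeff_mul (m := lex) (f := vandermonde k R) (g := p)
  rw [h, leadingCoeff, hdegA, coeff_alternant_hlNumerator hd, nsmul_eq_mul, mul_comm] at hlc
  exact (mul_left_cancel₀ hlcV hlc).symm

end IsDomain

section Int

local notation "K" => FractionRing (MvPolynomial (Fin k) ℤ)

theorem algebraMap_rename_hlNumerator (lam : Fin k → ℕ) (σ : Perm (Fin k)) :
    algebraMap _ K (rename σ (hlNumerator (R := ℤ) (Finsupp.equivFunOnFinite.symm lam))) =
      (∏ s, Xz k (σ s) ^ lam s) * ∏ i, ∏ j ∈ Ioi i, (Xz k (σ i) - Xz k (σ j) + 1) := by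
  rw [hlNumerator, monomial_eq, C_1, one_mul, Finsupp.prod_fintype _ _ (by simp)]
  simp [shiftedVandermonde, map_prod, Xz]

theorem algebraMap_rename_vandermonde (σ : Perm (Fin k)) :
    algebraMap _ K (rename σ (vandermonde k ℤ)) =
      ∏ i, ∏ j ∈ Ioi i, (Xz k (σ i) - Xz k (σ j)) := by
  simp [vandermonde, map_prod, Xz]

theorem hlSum_mul_vandermonde (lam : Fin k → ℕ) :
    hlSum k lam * algebraMap _ K (vandermonde k ℤ) =
      algebraMap _ K (alternant (hlNumerator (R := ℤ) (Finsupp.equivFunOnFinite.symm lam))) := by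
  have hV : algebraMap _ K (vandermonde k ℤ) ≠ 0 :=
    (map_ne_zero_iff _ (IsFractionRing.injective _ K)).2 vandermonde_ne_zero
  rw [hlSum, alternant, map_sum, sum_mul]
  refine sum_congr rfl fun σ _ => ?_
  simp only [prod_div_distrib]
  rw [← algebraMap_rename_vandermonde, ← mul_div_assoc, ← algebraMap_rename_hlNumerator,
    rename_vandermonde, Units.smul_def, Units.smul_def, map_zsmul, map_zsmul]
  rcases Int.units_eq_one_or (Perm.sign σ) with h | h <;> simp [h, hV, div_neg]

theorem card_mapDomain_fixed_eq_mulOf (lam : Fin k → ℕ) :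
    #{σ : Perm (Fin k) | (Finsupp.equivFunOnFinite.symm lam).mapDomain σ =
      Finsupp.equivFunOnFinite.symm lam} = mulOf k lam := by
  classical
  have hstab (σ : Perm (Fin k)) :
      (Finsupp.equivFunOnFinite.symm lam).mapDomain σ = Finsupp.equivFunOnFinite.symm lam ↔
        lam ∘ σ = lam := by
    have hcoe : ⇑((Finsupp.equivFunOnFinite.symm lam).mapDomain σ) = lam ∘ σ.symm :=
      funext fun _ => Finsupp.mapDomain_equiv_apply _ _
    rw [← DFunLike.coe_fn_eq, hcoe, Finsupp.coe_equivFunOnFinite_symm]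
    constructor <;> intro h <;> nth_rw 1 [← h] <;> ext <;> simp
  rw [← Fintype.card_subtype, Fintype.card_congr (Equiv.subtypeEquivRight hstab),
    DomMulAct.stabilizer_card', mulOf]
  simp only [Fintype.card_subtype]

theorem vandermonde_mul_eq_alternant_of_hlSum_eq {lam : Fin k → ℕ} {P : MvPolynomial (Fin k) ℤ}
    (hP : hlSum k lam = (mulOf k lam : K) * algebraMap _ K P) :
    vandermonde k ℤ * ((mulOf k lam : MvPolynomial (Fin k) ℤ) * P) =
      alternant (hlNumerator (Finsupp.equivFunOnFinite.symm lam)) := by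
  apply IsFractionRing.injective _ K
  rw [← hlSum_mul_vandermonde, hP, map_mul, map_mul, map_natCast]
  ring

theorem mulOf_ne_zero (lam : Fin k → ℕ) : mulOf k lam ≠ 0 :=
  prod_ne_zero_iff.2 fun _ _ => Nat.factorial_ne_zero _

theorem degree_eq_and_monic_of_hlSum_eq {lam : Fin k → ℕ} (hlam : Antitone lam)
    {P : MvPolynomial (Fin k) ℤ} (hP : hlSum k lam = (mulOf k lam : K) * algebraMap _ K P) :
    lex.degree P = Finsupp.equivFunOnFinite.symm lam ∧ lex.Monic P := by
  have hm : IsRegular (mulOf k lam : ℤ) :=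
    IsRegular.of_ne_zero (by simpa using mulOf_ne_zero lam)
  obtain ⟨hdeg, hlc⟩ := degree_and_leadingCoeff_of_vandermonde_mul_eq_alternant hlam
    (vandermonde_mul_eq_alternant_of_hlSum_eq hP)
  rw [← map_natCast (C : ℤ →+* _), ← smul_eq_C_mul] at hdeg hlc
  rw [degree_smul_of_isRegular hm] at hdeg
  rw [card_mapDomain_fixed_eq_mulOf, leadingCoeff, degree_smul_of_isRegular hm, coeff_smul,
    ← leadingCoeff, smul_eq_mul] at hlc
  exact ⟨hdeg, hm.left (hlc.trans (mul_one _).symm)⟩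

theorem isSymmetric_of_hlSum_eq {lam : Fin k → ℕ} {P : MvPolynomial (Fin k) ℤ}
    (hP : hlSum k lam = (mulOf k lam : K) * algebraMap _ K P) : P.IsSymmetric := by
  intro τ
  have hτ := isSymmetric_of_vandermonde_mul_eq_alternant
    (vandermonde_mul_eq_alternant_of_hlSum_eq hP) τ
  rw [map_mul, map_natCast] at hτ
  exact mul_left_cancel₀ (by simpa using mulOf_ne_zero lam) hτ

end Int

end HallLittlewood

open HallLittlewood

/-- for every `k`, the family of Hall–Littlewood polynomials `P_λ`, indexed by
the partitions `λ` of length `k` (i.e. antitone tuples `λ : Fin k → ℕ`) and characterized by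
`mul(λ)·P_λ = hlSum λ` in the fraction field, is a basis of the ℤ-module of symmetric
polynomials in `ℤ[x_1,…,x_k]`: it is linearly independent over ℤ and every symmetric
polynomial with integer coefficients is a ℤ-linear combination of the `P_λ`. -/
theorem stmt_4 (k : ℕ)
    (P : {lam : Fin k → ℕ // Antitone lam} → MvPolynomial (Fin k) ℤ)
    (hP : ∀ lam : {lam : Fin k → ℕ // Antitone lam},
      hlSum k lam.1
        = (mulOf k lam.1 : FractionRing (MvPolynomial (Fin k) ℤ)) *
            algebraMap (MvPolynomial (Fin k) ℤ) (FractionRing (MvPolynomial (Fin k) ℤ)) (P lam)) :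
    LinearIndependent ℤ P ∧
      ∀ f : MvPolynomial (Fin k) ℤ, f.IsSymmetric → f ∈ Submodule.span ℤ (Set.range P) := by
  have hspec x := degree_eq_and_monic_of_hlSum_eq x.2 (hP x)
  refine ⟨linearIndependent_of_monic_of_injective_degree (m := lex) (fun x => (hspec x).2)
    fun x y hxy => ?_, fun f hf => ?_⟩
  · exact Subtype.ext <| Finsupp.equivFunOnFinite.symm.injective <|
      (hspec x).1.symm.trans (hxy.trans (hspec y).1)
  · refine le_span_of_forall_exists_monic_degree_eq (m := lex)
      (M := (symmetricSubalgebra (Fin k) ℤ).toSubmodule) (fun g hg _ => ?_) hf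
    exact ⟨⟨lex.degree g, hg.antitone_lex_degree⟩, isSymmetric_of_hlSum_eq (hP _), (hspec _).2,
      (hspec _).1.trans (Finsupp.equivFunOnFinite_symm_coe _)⟩
end

section
/- Let n ≥ 2 and let U(sl_n) be the universal enveloping algebra over ℂ of the Lie algebra sl_n of traceless n×n complex matrices, with canonical embedding ι : sl_n → U(sl_n). For 1 ≤ i ≤ j ≤ n−1 let x_{[i,j]} := E_{i,j+1} (the matrix unit with a single 1 in position (i, j+1)). Then the ℤ-subalgebra of U(sl_n) generated by all divided powers ι(x_{[i,j]})^t / t! (1 ≤ i ≤ j ≤ n−1, t ∈ ℕ) equals the ℤ-subalgebra generated by the simple-root divided powers ι(E_{i,i+1})^t / t! (1 ≤ i ≤ n−1, t ∈ ℕ). -/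
/-!
If `c = ⁅a, b⁆` commutes with `a` and `b`, then `(ad a)ⁿ (bⁿ) = n! cⁿ`, while expanding
`ad a = L_a - R_a` binomially gives `(ad a)ⁿ (bⁿ) = ∑_{p+q=n} C(n,p) aᵖ bⁿ (-a)^q`. Dividing by
`(n!)²` writes `c⁽ⁿ⁾` as a ℤ-combination of products `a⁽ᵖ⁾ b⁽ⁿ⁾ a⁽q⁾`. With `a = E_{i,j+1}`,
`b = E_{j+1,j+2}` and `c = E_{i,j+2}`, induction on `j` puts every root-vector divided power in the
subring generated by the simple ones.
-/

open LieAlgebra.SpecialLinear UniversalEnvelopingAlgebra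

attribute [local instance] LieRing.ofAssociativeRing

noncomputable def dividedPower (K : Type*) [Field K] {A : Type*} [Ring A] [Algebra K A] (x : A)
    (t : ℕ) : A :=
  (t.factorial : K)⁻¹ • x ^ t

section Ring

open Finset LinearMap

variable {K A : Type*} [Field K] [Ring A] [Algebra K A]

theorem lie_pow_right_of_commute {a b : A} (hb : Commute b ⁅a, b⁆) (m : ℕ) :
    ⁅a, b ^ m⁆ = m • (⁅a, b⁆ * b ^ (m - 1)) := by
  induction m with
  | zero => simp [Ring.lie_def]
  | succ m ih =>
    have split : ⁅a, b ^ (m + 1)⁆ = ⁅a, b ^ m⁆ * b + b ^ m * ⁅a, b⁆ := by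
      simp only [Ring.lie_def, pow_succ]; noncomm_ring
    rcases m with _ | m
    · simp
    · rw [split, ih, Nat.add_sub_cancel, smul_mul_assoc, mul_assoc, ← pow_succ,
        (hb.pow_left _).eq, Nat.add_sub_cancel, ← succ_nsmul]

theorem Commute.lie_mul_right {a c : A} (h : Commute a c) (x : A) : ⁅a, c * x⁆ = c * ⁅a, x⁆ := by
  rw [Ring.lie_def, Ring.lie_def, ← mul_assoc, h.eq, mul_sub, mul_assoc, mul_assoc]

theorem iterate_lie_pow_of_commute {a b : A} (ha : Commute a ⁅a, b⁆)
    (hb : Commute b ⁅a, b⁆) (n k : ℕ) :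
    (fun x ↦ ⁅a, x⁆)^[k] (b ^ n) = n.descFactorial k • (⁅a, b⁆ ^ k * b ^ (n - k)) := by
  induction k with
  | zero => simp
  | succ k ih =>
    rw [Function.iterate_succ_apply', ih, lie_nsmul, (ha.pow_right k).lie_mul_right,
      lie_pow_right_of_commute hb, mul_smul_comm, smul_smul, ← mul_assoc, ← pow_succ,
      Nat.descFactorial_succ, mul_comm, Nat.sub_sub]

theorem iterate_lie_eq_sum (a x : A) (n : ℕ) :
    (fun y ↦ ⁅a, y⁆)^[n] x =
      ∑ pq ∈ antidiagonal n, n.choose pq.1 • (a ^ pq.1 * x * (-a) ^ pq.2) := by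
  have ad_eq : (fun y ↦ ⁅a, y⁆) = ⇑(mulLeft ℤ a + mulRight ℤ (-a)) := by
    ext y; simp [Ring.lie_def, sub_eq_add_neg]
  rw [ad_eq, ← Module.End.coe_pow, (commute_mulLeft_right a (-a)).add_pow', LinearMap.sum_apply]
  refine sum_congr rfl fun pq _ ↦ ?_
  rw [LinearMap.smul_apply, Module.End.mul_apply, pow_mulLeft, pow_mulRight, mulRight_apply,
    mulLeft_apply, mul_assoc]

open Nat in
theorem dividedPower_lie_eq_sum [CharZero K] {a b : A} (ha : Commute a ⁅a, b⁆)
    (hb : Commute b ⁅a, b⁆) (n : ℕ) :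
    dividedPower K ⁅a, b⁆ n = ∑ pq ∈ antidiagonal n,
      (-1 : ℤ) ^ pq.2 • (dividedPower K a pq.1 * dividedPower K b n * dividedPower K a pq.2) := by
  have key : n ! • ⁅a, b⁆ ^ n =
      ∑ pq ∈ antidiagonal n, n.choose pq.1 • (a ^ pq.1 * b ^ n * (-a) ^ pq.2) := by
    rw [← iterate_lie_eq_sum, iterate_lie_pow_of_commute ha hb, Nat.descFactorial_self,
      Nat.sub_self, pow_zero, mul_one]
  have hn : (n ! : K) ≠ 0 := mod_cast n.factorial_ne_zero
  rw [dividedPower, ← inv_smul_smul₀ hn (⁅a, b⁆ ^ n), Nat.cast_smul_eq_nsmul, key, smul_sum,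
    smul_sum]
  refine sum_congr rfl fun ⟨p, q⟩ hpq ↦ ?_
  obtain rfl : p + q = n := mem_antidiagonal.mp hpq
  simp only [dividedPower, ← neg_one_smul K a, smul_pow, ← Nat.cast_smul_eq_nsmul K,
    ← Int.cast_smul_eq_zsmul K, smul_mul_assoc, mul_smul_comm, smul_smul]
  congr 1
  rw [cast_add_choose]
  push_cast
  field_simp

theorem dividedPower_lie_mem [CharZero K] {S : Subring A} {a b : A} (ha : Commute a ⁅a, b⁆)
    (hb : Commute b ⁅a, b⁆) (haS : ∀ t, dividedPower K a t ∈ S)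
    (hbS : ∀ t, dividedPower K b t ∈ S) (t : ℕ) : dividedPower K ⁅a, b⁆ t ∈ S := by
  rw [dividedPower_lie_eq_sum ha hb]
  exact S.sum_mem fun pq _ ↦ S.zsmul_mem (S.mul_mem (S.mul_mem (haS _) (hbS _)) (haS _)) _

end Ring

theorem commute_ι_of_lie_eq_zero {R L : Type*} [CommRing R] [LieRing L] [LieAlgebra R L]
    {x y : L} (h : ⁅x, y⁆ = 0) : Commute (ι R x) (ι R y) := by
  have := (ι R).map_lie x y
  rwa [h, map_zero, Ring.lie_def, eq_comm, sub_eq_zero] at this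

section SpecialLinear

variable {n R : Type*} [Fintype n] [DecidableEq n] [CommRing R]

theorem lie_single_single {i j k : n} {hij : i ≠ j} {hjk : j ≠ k} (hik : i ≠ k) (r s : R) :
    ⁅single i j hij r, single j k hjk s⁆ = single i k hik (r * s) := by
  apply Subtype.ext
  rw [sl_bracket, val_single, val_single, val_single, Matrix.single_mul_single_same,
    Matrix.single_mul_single_of_ne (h := hik.symm), sub_zero]

theorem lie_single_single_of_ne {i j k l : n} {hij : i ≠ j} {hkl : k ≠ l} (hjk : j ≠ k)
    (hli : l ≠ i) (r s : R) : ⁅single i j hij r, single k l hkl s⁆ = 0 := by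
  apply Subtype.ext
  rw [sl_bracket, val_single, val_single, Matrix.single_mul_single_of_ne (h := hjk),
    Matrix.single_mul_single_of_ne (h := hli), sub_zero, ZeroMemClass.coe_zero]

end SpecialLinear

section CharZero

variable {K : Type*} [Field K] [CharZero K]

theorem dividedPower_ι_lie_mem {L : Type*} [LieRing L] [LieAlgebra K L]
    {S : Subring (UniversalEnvelopingAlgebra K L)} {x y : L}
    (hx : ⁅x, ⁅x, y⁆⁆ = 0) (hy : ⁅y, ⁅x, y⁆⁆ = 0) (hxS : ∀ t, dividedPower K (ι K x) t ∈ S)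
    (hyS : ∀ t, dividedPower K (ι K y) t ∈ S) (t : ℕ) : dividedPower K (ι K ⁅x, y⁆) t ∈ S := by
  rw [LieHom.map_lie]
  refine dividedPower_lie_mem ?_ ?_ hxS hyS t <;> rw [← LieHom.map_lie]
  exacts [commute_ι_of_lie_eq_zero hx, commute_ι_of_lie_eq_zero hy]

theorem dividedPower_ι_single_mem {n : ℕ}
    {S : Subring (UniversalEnvelopingAlgebra K (sl (Fin n) K))}
    (hS : ∀ (i : Fin n) (hi : i.val + 1 < n) t, dividedPower K
      (ι K (single i ⟨i + 1, hi⟩ (Fin.ne_of_val_ne (Nat.succ_ne_self i).symm) 1)) t ∈ S)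
    {i : Fin n} {j : ℕ} (hij : i.val ≤ j) (hj : j + 1 < n) (t : ℕ) :
    dividedPower K (ι K (single i ⟨j + 1, hj⟩ (Fin.ne_of_val_ne (by simp only; omega)) 1)) t ∈
      S := by
  induction j, hij using Nat.le_induction generalizing t with
  | base => exact hS i hj t
  | succ j hij ih =>
    have hia : i ≠ ⟨j + 1, by omega⟩ := Fin.ne_of_val_ne (by simp only; omega)
    have hib : i ≠ ⟨j + 2, hj⟩ := Fin.ne_of_val_ne (by simp only; omega)
    have hab : (⟨j + 1, by omega⟩ : Fin n) ≠ ⟨j + 2, hj⟩ := Fin.ne_of_val_ne (by simp only; omega)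
    have := dividedPower_ι_lie_mem (x := single i _ hia (1 : K)) (y := single _ _ hab (1 : K))
      ?_ ?_ (ih (by omega)) (hS _ hj) t
    · rwa [lie_single_single hib, mul_one] at this
    all_goals rw [lie_single_single hib]
    · exact lie_single_single_of_ne hia.symm hib.symm _ _
    · exact lie_single_single_of_ne hib.symm hab.symm _ _

end CharZero

/-- for `n ≥ 2`, in the universal enveloping algebra `U(sl_n)` over ℂ, the
ℤ-subalgebra (subring) generated by all divided powers `ι(x_{[i,j]})^t/t!` of the positive
root vectors `x_{[i,j]} = E_{i,j+1}` (for `1 ≤ i ≤ j ≤ n−1`, `t ∈ ℕ`) equals the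
ℤ-subalgebra generated by the simple-root divided powers `ι(E_{i,i+1})^t/t!`
(for `1 ≤ i ≤ n−1`, `t ∈ ℕ`); i.e. the positive part of the Kostant ℤ-form is generated by
divided powers of simple root vectors.  (Indices below are 0-based: `0 ≤ i ≤ j ≤ n−2`.) -/
theorem stmt_5 (n : ℕ) :
    Subring.closure
      {u : UniversalEnvelopingAlgebra ℂ (sl (Fin n) ℂ) |
        ∃ (i j t : ℕ) (_ : i ≤ j) (hj : j + 1 < n),
          u = ((t.factorial : ℂ)⁻¹) •
            (ι ℂ (single (⟨i, by omega⟩ : Fin n) (⟨j + 1, hj⟩ : Fin n)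
              (by simp only [ne_eq, Fin.mk.injEq]; omega) (1 : ℂ))) ^ t}
    = Subring.closure
      {u : UniversalEnvelopingAlgebra ℂ (sl (Fin n) ℂ) |
        ∃ (i t : ℕ) (hi : i + 1 < n),
          u = ((t.factorial : ℂ)⁻¹) •
            (ι ℂ (single (⟨i, by omega⟩ : Fin n) (⟨i + 1, hi⟩ : Fin n)
              (by simp only [ne_eq, Fin.mk.injEq]; omega) (1 : ℂ))) ^ t} := by
  apply le_antisymm
  · rw [Subring.closure_le]
    rintro u ⟨i, j, t, hij, hj, rfl⟩
    refine dividedPower_ι_single_mem (i := ⟨i, _⟩) (fun i hi t ↦ Subring.subset_closure ?_) hij hj t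
    exact ⟨i, t, hi, rfl⟩
  · apply Subring.closure_mono
    rintro u ⟨i, t, hi, rfl⟩
    exact ⟨i, i, t, le_rfl, hi, rfl⟩
end

section
/- Let A be an associative unital ℚ-algebra, let x, y ∈ A, set z := x*y − y*x, and assume x*z = z*x and y*z = z*y. Then for all r, t ∈ ℕ: (x^r / r!) * (y^t / t!) = ∑_{i=0}^{min(r,t)} (y^{t−i} / (t−i)!) * (x^{r−i} / (r−i)!) * (z^i / i!). -/
/-!
Left multiplication by `x` is the sum of the two commuting operators `ad x` and right
multiplication by `x`, so the binomial theorem gives `x^r b = ∑ C(r,i) (ad x)^i(b) x^(r-i)`.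
On the commutative subring generated by `y` and `z` the derivation `ad x` acts as `z ∂/∂y`,
hence `(ad x)^i (y^t) = t(t-1)⋯(t-i+1) y^(t-i) z^i`. Dividing by `r! t!` turns the coefficients
`C(r,i) t(t-1)⋯(t-i+1)` into `1 / ((t-i)! (r-i)! i!)`, and they vanish for `i > t`.
-/

open Finset LieAlgebra

attribute [local instance] LieRing.ofAssociativeRing

section Leibniz

variable (R : Type*) {A : Type*} [CommRing R] [Ring A] [Algebra R A]

theorem pow_mul_eq_sum_ad_pow (a b : A) (n : ℕ) :
    a ^ n * b = ∑ i ∈ range (n + 1), n.choose i • ((ad R A a ^ i) b * a ^ (n - i)) := by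
  have had : ad R A a = LinearMap.mulLeft R a - LinearMap.mulRight R a :=
    congrFun (ad_eq_lmul_left_sub_lmul_right (R := R) A) a
  have hcomm : Commute (ad R A a) (LinearMap.mulRight R a) :=
    had ▸ (LinearMap.commute_mulLeft_right a a).sub_left (Commute.refl _)
  calc a ^ n * b = ((ad R A a + LinearMap.mulRight R a) ^ n) b := by simp [had]
    _ = _ := by
      rw [hcomm.add_pow, LinearMap.sum_apply]
      refine sum_congr rfl fun i _ => ?_
      rw [(hcomm.pow_pow i (n - i)).eq]
      simp only [Module.End.mul_apply, Module.End.natCast_apply, map_nsmul, LinearMap.pow_mulRight,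
        LinearMap.mulRight_apply]

end Leibniz

section Commutator

variable {A : Type*} [Ring A] {x y z : A}

theorem Ring.lie_mul (a b c : A) : ⁅a, b * c⁆ = ⁅a, b⁆ * c + b * ⁅a, c⁆ := by
  simp only [Ring.lie_def]
  noncomm_ring

theorem lie_pow_eq_nsmul (hxy : ⁅x, y⁆ = z) (hyz : Commute y z) (s : ℕ) :
    ⁅x, y ^ s⁆ = s • (y ^ (s - 1) * z) := by
  rcases s with _ | s
  · simp [Ring.lie_def]
  induction s with
  | zero => simpa using hxy
  | succ s ih =>
    rw [pow_succ, Ring.lie_mul, ih, hxy, smul_mul_assoc, mul_assoc, ← hyz.eq, ← mul_assoc,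
      ← pow_succ]
    simp only [Nat.add_sub_cancel]
    rw [succ_nsmul _ (s + 1)]

variable {R : Type*} [CommRing R] [Algebra R A]

theorem ad_pow_apply_pow (hxy : ⁅x, y⁆ = z) (hxz : Commute x z) (hyz : Commute y z) (t i : ℕ) :
    (ad R A x ^ i) (y ^ t) = t.descFactorial i • (y ^ (t - i) * z ^ i) := by
  induction i with
  | zero => simp
  | succ i ih =>
    rw [pow_succ', Module.End.mul_apply, ih, map_nsmul, ad_apply, Ring.lie_mul,
      lie_pow_eq_nsmul hxy hyz, (hxz.pow_right i).lie_eq, Nat.descFactorial_succ, mul_nsmul,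
      Nat.sub_sub, smul_mul_assoc, mul_assoc, ← pow_succ']
    rw [mul_zero, add_zero]

theorem pow_mul_pow_eq_sum (hxy : ⁅x, y⁆ = z)
    (hxz : Commute x z) (hyz : Commute y z) (r t : ℕ) :
    x ^ r * y ^ t = ∑ i ∈ range (r + 1),
      (r.choose i * t.descFactorial i) • (y ^ (t - i) * x ^ (r - i) * z ^ i) := by
  rw [pow_mul_eq_sum_ad_pow ℤ]
  refine sum_congr rfl fun i _ => ?_
  rw [ad_pow_apply_pow hxy hxz hyz, smul_mul_assoc, smul_smul, mul_assoc, mul_assoc,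
    ← (hxz.pow_pow (r - i) i).eq]

end Commutator

theorem choose_mul_descFactorial_mul_factorials {r t i : ℕ} (hir : i ≤ r) (hit : i ≤ t) :
    r.choose i * t.descFactorial i * ((t - i).factorial * (r - i).factorial * i.factorial)
      = r.factorial * t.factorial := by
  rw [← Nat.choose_mul_factorial_mul_factorial hir, ← Nat.factorial_mul_descFactorial hit]
  ring

/-- in an associative unital ℚ-algebra `A`, if `z := x*y − y*x` commutes with
both `x` and `y`, then for all `r, t ∈ ℕ`:
`(x^r/r!) * (y^t/t!) = ∑_{i=0}^{min(r,t)} (y^{t−i}/(t−i)!) * (x^{r−i}/(r−i)!) * (z^i/i!)`. -/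
theorem stmt_6 {A : Type*} [Ring A] [Algebra ℚ A] (x y : A)
    (hxz : x * (x * y - y * x) = (x * y - y * x) * x)
    (hyz : y * (x * y - y * x) = (x * y - y * x) * y)
    (r t : ℕ) :
    ((r.factorial : ℚ)⁻¹ • x ^ r) * ((t.factorial : ℚ)⁻¹ • y ^ t)
      = ∑ i ∈ Finset.range (min r t + 1),
          (((t - i).factorial : ℚ)⁻¹ • y ^ (t - i)) *
            (((r - i).factorial : ℚ)⁻¹ • x ^ (r - i)) *
              ((i.factorial : ℚ)⁻¹ • (x * y - y * x) ^ i) := by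
  have hsub : range (min r t + 1) ⊆ range (r + 1) := range_subset_range.mpr (by omega)
  rw [smul_mul_smul_comm, pow_mul_pow_eq_sum (z := x * y - y * x) rfl hxz hyz, smul_sum,
    ← sum_subset hsub fun i hir hi => ?vanish]
  case vanish =>
    have hti : t < i := by simp only [mem_range] at hir hi; omega
    rw [Nat.descFactorial_eq_zero_iff_lt.mpr hti, mul_zero, zero_smul, smul_zero]
  refine sum_congr rfl fun i hi => ?_
  have hir : i ≤ r := by simp only [mem_range] at hi; omega
  have hit : i ≤ t := by simp only [mem_range] at hi; omega
  rw [smul_mul_smul_comm, smul_mul_smul_comm, ← Nat.cast_smul_eq_nsmul ℚ, smul_smul]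
  congr 1
  have hfact : (r.choose i * t.descFactorial i * ((t - i).factorial * (r - i).factorial *
      i.factorial) : ℚ) = r.factorial * t.factorial := by
    exact_mod_cast choose_mul_descFactorial_mul_factorials hir hit
  field_simp
  push_cast
  linear_combination hfact
end

section
/- Let 𝕜 be a field of characteristic p > 2, let m ≥ p be an integer, and let μ_1,…,μ_m ∈ ℕ. Consider in the fraction field of 𝕜[x_1,…,x_m] the element g := ∑_{σ ∈ S_m} ∏_{s=1}^{m} x_{σ(s)}^{μ_s} · ∏_{1≤i<j≤m} (x_{σ(i)} − x_{σ(j)} + 1)/(x_{σ(i)} − x_{σ(j)}). Then g is the image of a (unique) polynomial G ∈ 𝕜[x_1,…,x_m], and G vanishes under the substitution x_i ↦ x_1 − (i−1) for 2 ≤ i ≤ p (with x_1 and x_{p+1},…,x_m left unchanged); i.e. G(x_1, x_1−1, …, x_1−(p−1), x_{p+1}, …, x_m) = 0. -/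
/-!
The shuffle product is `N / Δ`, where `Δ = ∏_{i<j} (x_i - x_j)` and `N` is the
antisymmetrization of `x^μ ∏_{i<j} (x_i - x_j + 1)`. Identifying `x_a` with `x_b` kills the
alternating polynomial `N` because `2 ≠ 0`, so each prime `x_a - x_b` divides `N`, hence so does
`Δ`, and `G = N / Δ`.

Under the wheel substitution every term of `N` vanishes: if `j` is the last position with
`σ j < p` and `i` the position of the value `σ j + 1 mod p`, then `i < j` and the factor
`x_{σ i} - x_{σ j} + 1` becomes `σ j + 1 - σ i = 0` in characteristic `p`. The substituted
variables stay pairwise distinct, so `Δ` does not vanish there, and therefore `G` does.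
-/

/-- The variable `x_i` viewed inside the fraction field of `𝕜[x_1, …, x_m]`. -/
noncomputable def Xk (𝕜 : Type*) [Field 𝕜] (m : ℕ) (i : Fin m) :
    FractionRing (MvPolynomial (Fin m) 𝕜) :=
  algebraMap (MvPolynomial (Fin m) 𝕜) (FractionRing (MvPolynomial (Fin m) 𝕜)) (MvPolynomial.X i)

open Finset Function Equiv MvPolynomial

section Vandermonde

variable {R : Type*} [CommRing R] {n : ℕ}

theorem prod_Ioi_sub_eq_det_vandermonde_neg (v : Fin n → R) :
    ∏ i, ∏ j ∈ Ioi i, (v i - v j) = (Matrix.vandermonde (-v)).det := by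
  simp [Matrix.det_vandermonde, neg_add_eq_sub]

theorem prod_Ioi_sub_comp_perm (v : Fin n → R) (σ : Perm (Fin n)) :
    ∏ i, ∏ j ∈ Ioi i, (v (σ i) - v (σ j)) =
      Perm.sign σ • ∏ i, ∏ j ∈ Ioi i, (v i - v j) := by
  rw [prod_Ioi_sub_eq_det_vandermonde_neg, prod_Ioi_sub_eq_det_vandermonde_neg, Units.smul_def,
    zsmul_eq_mul]
  exact Matrix.det_permute σ (Matrix.vandermonde (-v))

theorem prod_Ioi_sub_ne_zero [IsDomain R] {v : Fin n → R} (hv : Injective v) :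
    ∏ i, ∏ j ∈ Ioi i, (v i - v j) ≠ 0 := by
  rw [prod_Ioi_sub_eq_det_vandermonde_neg, Matrix.det_vandermonde_ne_zero_iff]
  exact neg_injective.comp hv

theorem prod_Ioi_div_mul_prod_Ioi_sub {K : Type*} [Field K] {v : Fin n → K} (hv : Injective v)
    (σ : Perm (Fin n)) :
    (∏ i, ∏ j ∈ Ioi i, (v (σ i) - v (σ j) + 1) / (v (σ i) - v (σ j))) *
        ∏ i, ∏ j ∈ Ioi i, (v i - v j) =
      Perm.sign σ • ∏ i, ∏ j ∈ Ioi i, (v (σ i) - v (σ j) + 1) := by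
  have hsign : ∏ i, ∏ j ∈ Ioi i, (v i - v j) =
      Perm.sign σ • ∏ i, ∏ j ∈ Ioi i, (v (σ i) - v (σ j)) := by
    rw [prod_Ioi_sub_comp_perm, smul_smul, Int.units_mul_self, one_smul]
  rw [hsign, mul_smul_comm, ← prod_mul_distrib]
  congr 1
  refine prod_congr rfl fun i _ => ?_
  rw [← prod_mul_distrib]
  exact prod_congr rfl fun j hj =>
    div_mul_cancel₀ _ (sub_ne_zero.2 ((hv.comp σ.injective).ne (mem_Ioi.1 hj).ne))

end Vandermonde

namespace MvPolynomial

variable {R σ : Type*} [CommRing R]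

theorem dvd_aeval_sub_aeval {S : Type*} [CommRing S] [Algebra R S] {d : S} {v w : σ → S}
    (h : ∀ i, d ∣ v i - w i) (f : MvPolynomial σ R) : d ∣ aeval v f - aeval w f := by
  rw [← Ideal.mem_span_singleton, ← Ideal.Quotient.eq]
  have hvw : (Ideal.Quotient.mkₐ R (Ideal.span {d})).comp (aeval v) =
      (Ideal.Quotient.mkₐ R (Ideal.span {d})).comp (aeval w) :=
    algHom_ext fun i => by simpa [Ideal.Quotient.eq, Ideal.mem_span_singleton] using h i
  exact congr($hvw f)

variable [DecidableEq σ]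

theorem X_sub_X_dvd_sub_aeval_update (a b : σ) (f : MvPolynomial σ R) :
    X a - X b ∣ f - aeval (update (X (R := R)) a (X b)) f := by
  have h := dvd_aeval_sub_aeval (d := X a - X b) (v := X) (w := update (X (R := R)) a (X b))
    (fun i => by rcases eq_or_ne i a with rfl | hi <;> simp [*]) f
  rwa [aeval_X_left_apply] at h

theorem prime_X_sub_X [IsDomain R] {a b : σ} (hab : a ≠ b) :
    Prime (X a - X b : MvPolynomial σ R) := by
  have hker : Ideal.span {(X a - X b : MvPolynomial σ R)} =
      RingHom.ker (aeval (update (X (R := R)) a (X b))) := by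
    ext f
    rw [Ideal.mem_span_singleton, RingHom.mem_ker]
    constructor
    · rintro ⟨g, rfl⟩
      simp [hab.symm]
    · intro hf
      have := X_sub_X_dvd_sub_aeval_update (R := R) a b f
      rwa [hf, sub_zero] at this
  rw [← Ideal.span_singleton_prime (sub_ne_zero.2 (X_injective.ne hab)), hker]
  exact RingHom.ker_isPrime _

theorem eq_or_eq_of_X_sub_X_dvd [Nontrivial R] {a b c d : σ} (hab : a ≠ b) (hcd : c ≠ d)
    (h : (X a - X b : MvPolynomial σ R) ∣ X c - X d) : c = a ∧ d = b ∨ c = b ∧ d = a := by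
  obtain ⟨g, hg⟩ := h
  have h0 := congr(aeval (update (X (R := R)) a (X b)) $hg)
  rw [map_sub, aeval_X, aeval_X, map_mul, map_sub, aeval_X, aeval_X, update_self,
    update_of_ne hab.symm, sub_self, zero_mul, sub_eq_zero, update_apply, update_apply] at h0
  split_ifs at h0 with hca hda <;> simp_all [X_inj]

theorem X_sub_X_dvd_of_rename_swap [IsDomain R] (h2 : (2 : R) ≠ 0) {a b : σ} (hab : a ≠ b)
    {f : MvPolynomial σ R} (hf : rename (swap a b) f = -f) : X a - X b ∣ f := by
  set φ : MvPolynomial σ R →ₐ[R] MvPolynomial σ R := aeval (update X a (X b))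
  have hφ : φ.comp (rename (swap a b)) = φ := algHom_ext fun c => by
    rcases eq_or_ne c a with rfl | hca
    · simp [φ, hab.symm]
    rcases eq_or_ne c b with rfl | hcb
    · simp [φ, hab.symm]
    · simp [φ, swap_apply_of_ne_of_ne hca hcb, hca]
  have hφf : φ f = 0 := by
    have h := congr($hφ f)
    rw [AlgHom.comp_apply, hf, map_neg, neg_eq_iff_add_eq_zero, ← two_mul] at h
    exact (mul_eq_zero.1 h).resolve_left (by simpa [← map_ofNat C 2] using h2)
  have := X_sub_X_dvd_sub_aeval_update a b f
  rwa [hφf, sub_zero] at this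

variable [Fintype σ]

noncomputable def antisymmetrize (f : MvPolynomial σ R) : MvPolynomial σ R :=
  ∑ τ : Perm σ, Perm.sign τ • rename τ f

theorem rename_antisymmetrize (τ : Perm σ) (f : MvPolynomial σ R) :
    rename τ (antisymmetrize f) = Perm.sign τ • antisymmetrize f := by
  rw [antisymmetrize, map_sum, smul_sum]
  refine Fintype.sum_equiv (Equiv.mulLeft τ) _ _ fun ρ => ?_
  rw [Units.smul_def, map_zsmul, ← Units.smul_def, rename_rename, Equiv.coe_mulLeft,
    Perm.sign_mul, smul_smul, ← mul_assoc, Int.units_mul_self, one_mul, Perm.coe_mul]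

theorem X_sub_X_dvd_antisymmetrize [IsDomain R] (h2 : (2 : R) ≠ 0) {a b : σ} (hab : a ≠ b)
    (f : MvPolynomial σ R) : X a - X b ∣ antisymmetrize f :=
  X_sub_X_dvd_of_rename_swap h2 hab <| by
    rw [rename_antisymmetrize, Perm.sign_swap hab, Units.neg_smul, one_smul]

theorem prod_Ioi_X_sub_X_dvd_antisymmetrize [IsDomain R] [UniqueFactorizationMonoid R]
    {n : ℕ} (h2 : (2 : R) ≠ 0) (f : MvPolynomial (Fin n) R) :
    ∏ i, ∏ j ∈ Ioi i, (X i - X j) ∣ antisymmetrize f := by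
  rw [prod_sigma']
  have hlt : ∀ q ∈ univ.sigma fun i : Fin n => Ioi i, q.1 < q.2 := fun q hq =>
    mem_Ioi.1 (mem_sigma.1 hq).2
  refine prod_dvd_of_isRelPrime (fun q hq r hr hqr => ?_) fun q hq =>
    X_sub_X_dvd_antisymmetrize h2 (hlt q hq).ne f
  refine (prime_X_sub_X (hlt q hq).ne).irreducible.isRelPrime_iff_not_dvd.2 fun h => hqr ?_
  rcases eq_or_eq_of_X_sub_X_dvd (hlt q hq).ne (hlt r hr).ne h with ⟨h1, h2⟩ | ⟨h1, h2⟩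
  · exact Sigma.ext h1.symm (heq_of_eq h2.symm)
  · exact absurd (h1 ▸ h2 ▸ hlt r hr) (hlt q hq).asymm

end MvPolynomial

theorem Equiv.Perm.exists_lt_modEq_succ {p m : ℕ} (hp : 1 < p) (hm : p ≤ m)
    (σ : Perm (Fin m)) :
    ∃ i j, i < j ∧ (σ i : ℕ) < p ∧ (σ j : ℕ) < p ∧
      (σ i : ℕ) ≡ σ j + 1 [MOD p] := by
  classical
  set t := univ.filter fun c => (σ c : ℕ) < p
  have ht : t.Nonempty :=
    ⟨σ.symm ⟨0, by omega⟩,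
      mem_filter.2 ⟨mem_univ _, by rw [apply_symm_apply]; exact Nat.zero_lt_of_lt hp⟩⟩
  set j := t.max' ht
  have hj : (σ j : ℕ) < p := (mem_filter.1 (t.max'_mem ht)).2
  set i := σ.symm ⟨(σ j + 1) % p, (Nat.mod_lt _ (by omega)).trans_le hm⟩
  have hi : (σ i : ℕ) = (σ j + 1) % p := by simp [i]
  have hip : (σ i : ℕ) < p := hi ▸ Nat.mod_lt _ (by omega)
  have hij : i ≠ j := by
    intro h
    have h1 : σ j + 1 ≡ σ j + 0 [MOD p] := by
      rw [add_zero, Nat.ModEq, Nat.mod_eq_of_lt hj, ← hi, h]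
    have hdvd := Nat.modEq_zero_iff_dvd.1 (Nat.ModEq.add_left_cancel' _ h1)
    exact absurd (Nat.le_of_dvd one_pos hdvd) (by omega)
  exact ⟨i, j, lt_of_le_of_ne (t.le_max' i (by simp [t, hip])) hij, hip, hj,
    hi ▸ Nat.mod_modEq _ _⟩

section Wheel

variable (R : Type*) [CommRing R] (p : ℕ) {m : ℕ} (h0 : 0 < m)

noncomputable def wheelSubst : Fin m → MvPolynomial (Fin m) R := fun i =>
  if (i : ℕ) < p then X ⟨0, h0⟩ - ((i : ℕ) : MvPolynomial (Fin m) R) else X i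

variable {R} [CharP R p]

theorem wheelSubst_injective [Nontrivial R] : Injective (wheelSubst R p h0) := by
  have hX : ∀ {i j : Fin m}, (i : ℕ) < p → ¬ (j : ℕ) < p →
      X ⟨0, h0⟩ - ((i : ℕ) : MvPolynomial (Fin m) R) ≠ X j := by
    intro i j hi hj h
    have hj0 : (⟨0, h0⟩ : Fin m) ≠ j := Fin.ne_of_val_ne (show 0 ≠ (j : ℕ) by omega)
    simpa [pderiv_X, Pi.single_apply, hj0] using congr(pderiv j $h)
  intro i j h
  simp only [wheelSubst] at h
  split_ifs at h with hi hj hj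
  · rw [sub_right_inj, CharP.natCast_eq_natCast _ p] at h
    exact Fin.ext (h.eq_of_lt_of_lt hi hj)
  · exact absurd h (hX hi hj)
  · exact absurd h.symm (hX hj hi)
  · exact X_injective h

theorem aeval_wheelSubst_comp_prod_Ioi_eq_zero (hp : 1 < p) (hm : p ≤ m) (σ : Perm (Fin m)) :
    aeval (wheelSubst R p h0 ∘ σ)
      (∏ i, ∏ j ∈ Ioi i, (X i - X j + 1) : MvPolynomial (Fin m) R) = 0 := by
  obtain ⟨i, j, hij, hi, hj, hmod⟩ := σ.exists_lt_modEq_succ hp hm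
  simp only [map_prod, map_add, map_sub, aeval_X, map_one]
  refine prod_eq_zero (mem_univ i) (prod_eq_zero (mem_Ioi.2 hij) ?_)
  simp only [comp_apply, wheelSubst, if_pos hi, if_pos hj]
  rw [(CharP.natCast_eq_natCast _ p).2 hmod]
  push_cast
  ring

end Wheel

section Shuffle

variable {R : Type*} [CommRing R] {n : ℕ}

noncomputable def shuffleNumerator (μ : Fin n → ℕ) : MvPolynomial (Fin n) R :=
  (∏ s, X s ^ μ s) * ∏ i, ∏ j ∈ Ioi i, (X i - X j + 1)

theorem aeval_wheelSubst_antisymmetrize_shuffleNumerator (p : ℕ) [CharP R p] (hp : 1 < p)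
    (hm : p ≤ n) (h0 : 0 < n) (μ : Fin n → ℕ) :
    aeval (wheelSubst R p h0) (antisymmetrize (shuffleNumerator (R := R) μ)) = 0 := by
  rw [antisymmetrize, map_sum]
  refine sum_eq_zero fun σ _ => ?_
  rw [Units.smul_def, map_zsmul, aeval_rename, shuffleNumerator, map_mul,
    aeval_wheelSubst_comp_prod_Ioi_eq_zero p h0 hp hm, mul_zero, smul_zero]

variable {K : Type*} [Field K] [Algebra R K] {v : Fin n → K}

theorem aeval_antisymmetrize_shuffleNumerator (hv : Injective v) (μ : Fin n → ℕ) :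
    aeval v (antisymmetrize (shuffleNumerator (R := R) μ)) =
      (∑ σ : Perm (Fin n), (∏ s, v (σ s) ^ μ s) *
        ∏ i, ∏ j ∈ Ioi i, (v (σ i) - v (σ j) + 1) / (v (σ i) - v (σ j))) *
      ∏ i, ∏ j ∈ Ioi i, (v i - v j) := by
  rw [antisymmetrize, map_sum, sum_mul]
  refine sum_congr rfl fun σ _ => ?_
  rw [mul_assoc, prod_Ioi_div_mul_prod_Ioi_sub hv σ, mul_smul_comm, Units.smul_def,
    Units.smul_def, map_zsmul, aeval_rename]
  simp [shuffleNumerator, map_prod]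

theorem aeval_eq_of_antisymmetrize_shuffleNumerator_eq_mul (hv : Injective v) {μ : Fin n → ℕ}
    {G : MvPolynomial (Fin n) R}
    (hG : antisymmetrize (shuffleNumerator μ) = (∏ i, ∏ j ∈ Ioi i, (X i - X j)) * G) :
    aeval v G = ∑ σ : Perm (Fin n), (∏ s, v (σ s) ^ μ s) *
      ∏ i, ∏ j ∈ Ioi i, (v (σ i) - v (σ j) + 1) / (v (σ i) - v (σ j)) := by
  refine mul_left_cancel₀ (prod_Ioi_sub_ne_zero hv) ?_
  have h := aeval_antisymmetrize_shuffleNumerator (R := R) hv μ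
  rw [hG, map_mul] at h
  simpa [map_prod, mul_comm] using h

end Shuffle

theorem Xk_injective (𝕜 : Type*) [Field 𝕜] (m : ℕ) : Injective (Xk 𝕜 m) :=
  (IsFractionRing.injective _ _).comp X_injective

theorem algebraMap_eq_aeval_Xk {𝕜 : Type*} [Field 𝕜] {m : ℕ}
    (f : MvPolynomial (Fin m) 𝕜) :
    algebraMap (MvPolynomial (Fin m) 𝕜) (FractionRing (MvPolynomial (Fin m) 𝕜)) f =
      aeval (Xk 𝕜 m) f :=
  congr($(aeval_unique
    (IsScalarTower.toAlgHom 𝕜 (MvPolynomial (Fin m) 𝕜) (FractionRing _))) f)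

/-- let `𝕜` have characteristic `p > 2`, `m ≥ p`, and `μ_1,…,μ_m ∈ ℕ`. The
element `g = ∑_{σ ∈ S_m} ∏_s x_{σ(s)}^{μ_s} ∏_{i<j} (x_{σ(i)}−x_{σ(j)}+1)/(x_{σ(i)}−x_{σ(j)})`
of the fraction field of `𝕜[x_1,…,x_m]` is the image of a unique polynomial `G`, and `G`
vanishes under the substitution `x_i ↦ x_1 − (i−1)` for `2 ≤ i ≤ p` (the wheel condition
`x_1 = x_2 + 1 = ⋯ = x_p + (p−1)` of characteristic `p`). -/
theorem stmt_7 (𝕜 : Type*) [Field 𝕜] (p : ℕ) [CharP 𝕜 p] (hp : 2 < p)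
    (m : ℕ) (hm : p ≤ m) (μ : Fin m → ℕ) :
    ∃! G : MvPolynomial (Fin m) 𝕜,
      algebraMap (MvPolynomial (Fin m) 𝕜) (FractionRing (MvPolynomial (Fin m) 𝕜)) G
        = ∑ σ : Equiv.Perm (Fin m),
            (∏ s : Fin m, Xk 𝕜 m (σ s) ^ μ s) *
              ∏ i : Fin m, ∏ j ∈ Finset.Ioi i,
                (Xk 𝕜 m (σ i) - Xk 𝕜 m (σ j) + 1) / (Xk 𝕜 m (σ i) - Xk 𝕜 m (σ j))
      ∧ MvPolynomial.aeval (fun i : Fin m =>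
            if (i : ℕ) < p then
              MvPolynomial.X (⟨0, by omega⟩ : Fin m) - ((i : ℕ) : MvPolynomial (Fin m) 𝕜)
            else MvPolynomial.X i) G = 0 := by
  have h2 : (2 : 𝕜) ≠ 0 := by
    exact_mod_cast (CharP.cast_eq_zero_iff 𝕜 p 2).not.2 (Nat.not_dvd_of_pos_of_lt two_pos hp)
  obtain ⟨G, hG⟩ := prod_Ioi_X_sub_X_dvd_antisymmetrize h2 (shuffleNumerator μ)
  have hg := (algebraMap_eq_aeval_Xk G).trans
    (aeval_eq_of_antisymmetrize_shuffleNumerator_eq_mul (Xk_injective 𝕜 m) hG)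
  refine ⟨G, ⟨hg, ?_⟩, fun G' hG' => IsFractionRing.injective _ _ (hG'.1.trans hg.symm)⟩
  have hN :=
    aeval_wheelSubst_antisymmetrize_shuffleNumerator (R := 𝕜) p (by omega) hm (by omega) μ
  rw [hG, map_mul] at hN
  refine (mul_eq_zero.1 hN).resolve_left ?_
  simpa only [map_prod, map_sub, aeval_X] using
    prod_Ioi_sub_ne_zero (wheelSubst_injective p (by omega))
end

section
/- For every positive root β ∈ Δ⁺ and all r, t ∈ ℕ, the divided power e_β(r)^t / t! lies in the integral form 𝐘_n^>, i.e. in the ℤ[1/2]-subalgebra of Y_n^> generated by the elements e_{i,r}^t / t! (i ∈ I, r, t ∈ ℕ). -/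
/-! Core definitions: the positive Yangian `Y_n^>` over a field, its root vectors,
and ordered PBW monomials. -/

/-- The Cartan matrix entries of `sl_n`, with 0-based indexing of the nodes. -/
def cartan (i j : ℕ) : ℤ :=
  if i = j then 2 else if i + 1 = j ∨ j + 1 = i then -1 else 0

variable (F : Type*) [Field F] (n : ℕ)

/-- The generator `e_{i,r}` inside the free algebra. -/
def eF (i : Fin (n - 1)) (r : ℕ) : FreeAlgebra F (Fin (n - 1) × ℕ) :=
  FreeAlgebra.ι F (i, r)

/-- The defining relations of the positive Yangian `Y_n^>`:
`[e_{i,r+1}, e_{j,s}] − [e_{i,r}, e_{j,s+1}] = (c_{ij}/2)(e_{i,r} e_{j,s} + e_{j,s} e_{i,r})`,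
`[e_{i,r}, e_{j,s}] = 0` if `c_{ij} = 0`, and the Serre relations
`[e_{i,r₁},[e_{i,r₂},e_{j,s}]] + [e_{i,r₂},[e_{i,r₁},e_{j,s}]] = 0` if `c_{ij} = −1`. -/
inductive YangianRel : FreeAlgebra F (Fin (n - 1) × ℕ) → FreeAlgebra F (Fin (n - 1) × ℕ) → Prop
  | quad (i j : Fin (n - 1)) (r s : ℕ) :
      YangianRel
        ((eF F n i (r+1) * eF F n j s - eF F n j s * eF F n i (r+1))
          - (eF F n i r * eF F n j (s+1) - eF F n j (s+1) * eF F n i r))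
        (((cartan i j : F) * (2 : F)⁻¹) •
          (eF F n i r * eF F n j s + eF F n j s * eF F n i r))
  | comm (i j : Fin (n - 1)) (r s : ℕ) (h : cartan i j = 0) :
      YangianRel (eF F n i r * eF F n j s - eF F n j s * eF F n i r) 0
  | serre (i j : Fin (n - 1)) (r₁ r₂ s : ℕ) (h : cartan i j = -1) :
      YangianRel
        (((eF F n i r₁) * ((eF F n i r₂) * (eF F n j s) - (eF F n j s) * (eF F n i r₂))
            - ((eF F n i r₂) * (eF F n j s) - (eF F n j s) * (eF F n i r₂)) * (eF F n i r₁))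
          + ((eF F n i r₂) * ((eF F n i r₁) * (eF F n j s) - (eF F n j s) * (eF F n i r₁))
            - ((eF F n i r₁) * (eF F n j s) - (eF F n j s) * (eF F n i r₁)) * (eF F n i r₂)))
        0

/-- The positive Yangian `Y_n^>` over `F`: the quotient of the free algebra on the
generators `e_{i,r}` by the defining relations. -/
abbrev Yangian := RingQuot (YangianRel F n)

/-- The generator `e_{i,r}` of `Y_n^>` (equal to `0` for out-of-range `i`, `0`-based). -/
noncomputable def gen (i r : ℕ) : Yangian F n :=
  if h : i < n - 1 then
    RingQuot.mkAlgHom F (YangianRel F n) (eF F n (⟨i, h⟩ : Fin (n - 1)) r)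
  else 0

/-- The root vector `e_{[i,j]}(r) = [⋯[[e_{i,r}, e_{i+1,0}], e_{i+2,0}], ⋯, e_{j,0}]`
attached to the positive root `[i,j]` (0-based: `0 ≤ i ≤ j ≤ n−2`) and `r ∈ ℕ`. -/
noncomputable def rootVec (i j r : ℕ) : Yangian F n :=
  (List.range' (i + 1) (j - i)).foldl
    (fun acc l => acc * gen F n l 0 - gen F n l 0 * acc) (gen F n i r)

/-- Index data `((i,j),r)` for a pair of a positive root `β = [i,j]` and `r ∈ ℕ`. -/
abbrev YIdx : Type := (ℕ × ℕ) × ℕ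

/-- The total order on `Δ⁺ × ℕ`: `([i,j],r) ≤ ([i',j'],r')` iff `i < i'`, or `i = i'` and
`j < j'`, or `i = i'`, `j = j'` and `r ≥ r'`. -/
def yIdxLe (a b : YIdx) : Prop :=
  a.1.1 < b.1.1 ∨ (a.1.1 = b.1.1 ∧ (a.1.2 < b.1.2 ∨ (a.1.2 = b.1.2 ∧ b.2 ≤ a.2)))

instance : DecidableRel yIdxLe := fun a b => by unfold yIdxLe; exact inferInstance

instance : IsTrans YIdx yIdxLe :=
  ⟨fun a b c h1 h2 => by unfold yIdxLe at *; omega⟩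

instance : IsAntisymm YIdx yIdxLe :=
  ⟨fun a b h1 h2 => by
    obtain ⟨⟨a1, a2⟩, a3⟩ := a
    obtain ⟨⟨b1, b2⟩, b3⟩ := b
    simp only [yIdxLe] at h1 h2
    have : a1 = b1 ∧ a2 = b2 ∧ a3 = b3 := by omega
    simp [this.1, this.2.1, this.2.2]⟩

instance : IsTotal YIdx yIdxLe := ⟨fun a b => by unfold yIdxLe; omega⟩

/-- `h : Δ⁺ × ℕ → ℕ` (finitely supported) is valid for `Y_n^>` when its support consists of
pairs `((i,j),r)` with `i ≤ j ≤ n−2` (0-based), i.e. `[i,j]` is a positive root of `sl_n`. -/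
def ValidSupp (h : YIdx →₀ ℕ) : Prop :=
  ∀ q ∈ h.support, q.1.1 ≤ q.1.2 ∧ q.1.2 < n - 1

/-- The ordered PBW monomial `E_h = ∏→ e_β(r)^{h(β,r)}`, the product being taken over the
support of `h` in the increasing order of `Δ⁺ × ℕ`. -/
noncomputable def Emon (h : YIdx →₀ ℕ) : Yangian F n :=
  ((h.support.sort yIdxLe).map (fun q => rootVec F n q.1.1 q.1.2 q.2 ^ h q)).prod

/-- `ℤ[1/2]`, realized as the localization of `ℤ` away from `2`. -/
abbrev ZHalf := Localization.Away (2 : ℤ)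

/-- A field in which `2 ≠ 0` is a `ℤ[1/2]`-algebra (via the unique ring map `ℤ[1/2] → 𝕜`). -/
noncomputable instance instAlgebraZHalf (𝕜 : Type*) [Field 𝕜] [NeZero (2 : 𝕜)] :
    Algebra ZHalf 𝕜 :=
  (Localization.awayLift (Int.castRingHom 𝕜) 2
    (by simpa using isUnit_iff_ne_zero.2 (NeZero.ne (2 : 𝕜)))).toAlgebra

/-- The Yangian `Y_n^>` over ℂ is a `ℤ[1/2]`-algebra. -/
noncomputable instance instAlgebraZHalfYangian (n : ℕ) : Algebra ZHalf (Yangian ℂ n) :=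
  RingHom.toAlgebra' ((algebraMap ℂ (Yangian ℂ n)).comp (algebraMap ZHalf ℂ))
    (fun c x => by simpa using Algebra.commutes (algebraMap ZHalf ℂ c) x)

/-- The integral form `𝐘_n^>`: the `ℤ[1/2]`-subalgebra of `Y_n^>` generated by the divided
powers `e_{i,r}^{(t)} = e_{i,r}^t / t!` (`i ∈ I`, `r, t ∈ ℕ`). -/
noncomputable def IntYangian (n : ℕ) : Subalgebra ZHalf (Yangian ℂ n) :=
  Algebra.adjoin ZHalf
    {x : Yangian ℂ n | ∃ (i r t : ℕ) (_ : i < n - 1),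
      x = ((t.factorial : ℂ)⁻¹) • gen ℂ n i r ^ t}

/-! Induction on the height of the root: `e_{[i,j+1]}(r) = [x, y]` with `x = e_{[i,j]}(r)` and
`y = e_{j+1,0}`. The Serre relations and the commutativity of non-adjacent generators give
`[[x, y], y] = 0`, so for the derivation `δ = [·, y]` we get `δ^t (x^t) = t! (δ x)^t`. Expanding
`δ^t = (R_y - L_y)^t` binomially turns this into
`[x, y]^t / t! = ∑ₖ (-1)^k (y^k / k!) (x^t / t!) (y^(t-k) / (t-k)!)`,
a `ℤ`-combination of products of divided powers already known to lie in `𝐘_n^>`. -/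

open Finset

section Commutator

variable (R : Type*) {A : Type*} [CommRing R] [Ring A] [Algebra R A]

def adRight (y : A) : Module.End R A :=
  LinearMap.mulRight R y - LinearMap.mulLeft R y

variable {R}

@[simp]
lemma adRight_apply (y a : A) : adRight R y a = a * y - y * a := rfl

lemma adRight_mul (y a b : A) : adRight R y (a * b) = adRight R y a * b + a * adRight R y b := by
  simp only [adRight_apply]; noncomm_ring

lemma adRight_adRight_of_adRight_eq_zero {y g v : A} (hv : adRight R y v = 0) :
    adRight R y (adRight R g v) = adRight R (adRight R y g) v := by
  rw [adRight_apply, sub_eq_zero] at hv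
  simp only [adRight_apply]
  calc (v * g - g * v) * y - y * (v * g - g * v)
      = v * (g * y) - g * (v * y) - (y * v) * g + y * (g * v) := by noncomm_ring
    _ = v * (g * y) - g * (y * v) - (v * y) * g + y * (g * v) := by rw [hv]
    _ = _ := by noncomm_ring

lemma adRight_pow_apply (y a : A) (t : ℕ) :
    (adRight R y ^ t) a =
      ∑ k ∈ range (t + 1), ((-1 : R) ^ k * t.choose k) • (y ^ k * a * y ^ (t - k)) := by
  have hcomm : Commute (-LinearMap.mulLeft R y : Module.End R A) (LinearMap.mulRight R y) :=
    (LinearMap.commute_mulLeft_right (R := R) y y).neg_left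
  rw [adRight, sub_eq_neg_add, hcomm.add_pow, LinearMap.sum_apply]
  refine sum_congr rfl fun k _ => ?_
  rw [← neg_one_smul R (LinearMap.mulLeft R y), smul_pow, LinearMap.pow_mulLeft,
    LinearMap.pow_mulRight]
  simp [Module.End.natCast_apply, mul_smul, mul_assoc, Nat.cast_smul_eq_nsmul,
    ((Nat.cast_commute (α := A) _ _).left_comm _)]

end Commutator

section Leibniz

variable {R A : Type*} [CommSemiring R] [Ring A] [Module R A]

lemma pow_apply_mul_of_apply_apply_eq_zero (D : Module.End R A)
    (hD : ∀ a b, D (a * b) = D a * b + a * D b) {x : A} (hx : D (D x) = 0) (k : ℕ) (w : A) :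
    (D ^ (k + 1)) (x * w) = x * (D ^ (k + 1)) w + (k + 1) • (D x * (D ^ k) w) := by
  induction k generalizing w with
  | zero => simp [hD, add_comm]
  | succ k ih =>
    have hpow (m : ℕ) (a : A) : (D ^ (m + 1)) a = D ((D ^ m) a) := by
      rw [pow_succ', Module.End.mul_apply]
    rw [hpow (k + 1), ih, map_add, map_nsmul, hD, hD, hx, zero_mul, zero_add, ← hpow, ← hpow,
      succ_nsmul _ (k + 1)]
    abel

lemma pow_apply_pow_eq_zero_of_lt (D : Module.End R A)
    (hD : ∀ a b, D (a * b) = D a * b + a * D b) {x : A} (hx : D (D x) = 0) {t k : ℕ}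
    (htk : t < k) : (D ^ k) (x ^ t) = 0 := by
  induction t generalizing k with
  | zero =>
    have hD1 : D 1 = 0 := by simpa using hD 1 1
    obtain ⟨k, rfl⟩ : ∃ k', k = k' + 1 := ⟨k - 1, by omega⟩
    rw [pow_zero, pow_succ, Module.End.mul_apply, hD1, map_zero]
  | succ t ih =>
    obtain ⟨k, rfl⟩ : ∃ k', k = k' + 1 := ⟨k - 1, by omega⟩
    rw [pow_succ' x, pow_apply_mul_of_apply_apply_eq_zero D hD hx, ih (by omega), ih (by omega)]
    simp

lemma pow_apply_pow_self (D : Module.End R A)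
    (hD : ∀ a b, D (a * b) = D a * b + a * D b) {x : A} (hx : D (D x) = 0) (t : ℕ) :
    (D ^ t) (x ^ t) = t.factorial • D x ^ t := by
  induction t with
  | zero => simp
  | succ t ih =>
    rw [pow_succ' x, pow_apply_mul_of_apply_apply_eq_zero D hD hx, ih,
      pow_apply_pow_eq_zero_of_lt D hD hx (Nat.lt_succ_self t), mul_zero, zero_add,
      mul_smul_comm, smul_smul, ← pow_succ', Nat.factorial_succ]

end Leibniz

section DividedPow

variable (K : Type*) {A : Type*} [Field K] [Ring A] [Algebra K A]

def dividedPow (a : A) (t : ℕ) : A :=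
  (t.factorial : K)⁻¹ • a ^ t

variable {K} [CharZero K]

theorem dividedPow_adRight_eq_sum {x y : A} (h : adRight K y (adRight K y x) = 0) (t : ℕ) :
    dividedPow K (adRight K y x) t =
      ∑ k ∈ range (t + 1),
        (-1 : ℤ) ^ k • (dividedPow K y k * dividedPow K x t * dividedPow K y (t - k)) := by
  have htop := pow_apply_pow_self (adRight K y) (adRight_mul y) h t
  rw [adRight_pow_apply] at htop
  have ht : (t.factorial : K) ≠ 0 := Nat.cast_ne_zero.2 t.factorial_ne_zero
  calc dividedPow K (adRight K y x) t
      = ((t.factorial : K)⁻¹ * (t.factorial : K)⁻¹) • (t.factorial • adRight K y x ^ t) := by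
        rw [dividedPow, ← Nat.cast_smul_eq_nsmul K, smul_smul, mul_assoc, inv_mul_cancel₀ ht,
          mul_one]
    _ = _ := by
      rw [← htop, smul_sum]
      refine sum_congr rfl fun k hk => ?_
      have hkt : k ≤ t := Nat.lt_succ_iff.1 (mem_range.1 hk)
      simp only [dividedPow, smul_mul_assoc, mul_smul_comm, smul_smul, ← Int.cast_smul_eq_zsmul K]
      congr 1
      rw [Nat.cast_choose K hkt]
      push_cast
      field_simp

end DividedPow

section Yangian

variable {F n}

lemma rootVec_self (i r : ℕ) : rootVec F n i i r = gen F n i r := by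
  rw [rootVec, Nat.sub_self, List.range'_zero, List.foldl_nil]

lemma rootVec_succ {i j : ℕ} (r : ℕ) (hij : i ≤ j) :
    rootVec F n i (j + 1) r = adRight F (gen F n (j + 1) 0) (rootVec F n i j r) := by
  rw [rootVec, rootVec, show j + 1 - i = j - i + 1 by omega, List.range'_concat,
    List.foldl_append, one_mul, show i + 1 + (j - i) = j + 1 by omega]
  rfl

lemma adRight_gen_gen_eq_zero {i j : ℕ} (r s : ℕ) (h : i + 2 ≤ j ∨ j + 2 ≤ i) :
    adRight F (gen F n i r) (gen F n j s) = 0 := by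
  unfold gen
  split_ifs with hi hj
  · have hc : cartan (⟨j, hj⟩ : Fin (n - 1)) (⟨i, hi⟩ : Fin (n - 1)) = 0 := by
      simp only [cartan]
      rw [if_neg (by omega), if_neg (by omega)]
    simpa only [adRight_apply, map_sub, map_mul, map_zero] using
      RingQuot.mkAlgHom_rel F (YangianRel.comm ⟨j, hj⟩ ⟨i, hi⟩ s r hc)
  all_goals simp

lemma adRight_gen_adRight_gen_gen_eq_zero [NeZero (2 : F)] {i j : ℕ} (r s : ℕ)
    (h : i + 1 = j ∨ j + 1 = i) :
    adRight F (gen F n i r) (adRight F (gen F n i r) (gen F n j s)) = 0 := by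
  unfold gen
  split_ifs with hi hj
  · have hc : cartan (⟨i, hi⟩ : Fin (n - 1)) (⟨j, hj⟩ : Fin (n - 1)) = -1 := by
      simp only [cartan]
      rw [if_neg (by omega), if_pos (by omega)]
    -- the Serre relation with `r₁ = r₂ = r` is twice the claim
    have hrel := RingQuot.mkAlgHom_rel F (YangianRel.serre (F := F) ⟨i, hi⟩ ⟨j, hj⟩ r r s hc)
    simp only [map_add, map_sub, map_mul, map_zero] at hrel
    rw [← two_smul F, smul_eq_zero_iff_right (NeZero.ne (2 : F))] at hrel
    rw [← hrel, adRight_apply, adRight_apply]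
    simp only [mul_sub, sub_mul, mul_assoc]
    abel
  all_goals simp

lemma adRight_gen_rootVec_eq_zero {i j l : ℕ} (r s : ℕ) (hij : i ≤ j) (hl : j + 2 ≤ l) :
    adRight F (gen F n l s) (rootVec F n i j r) = 0 := by
  induction j, hij using Nat.le_induction with
  | base => rw [rootVec_self]; exact adRight_gen_gen_eq_zero s r (Or.inr hl)
  | succ j hij ih =>
    rw [rootVec_succ r hij, adRight_adRight_of_adRight_eq_zero (ih (by omega)),
      adRight_gen_gen_eq_zero s 0 (Or.inr hl)]
    simp

lemma adRight_gen_adRight_gen_rootVec_eq_zero [NeZero (2 : F)] {i j : ℕ} (r : ℕ) (hij : i ≤ j) :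
    adRight F (gen F n (j + 1) 0) (adRight F (gen F n (j + 1) 0) (rootVec F n i j r)) = 0 := by
  cases hij with
  | refl => rw [rootVec_self]; exact adRight_gen_adRight_gen_gen_eq_zero 0 r (Or.inr rfl)
  | step hij =>
    have hv := adRight_gen_rootVec_eq_zero (F := F) (n := n) r 0 hij le_rfl
    rw [rootVec_succ r hij, adRight_adRight_of_adRight_eq_zero hv,
      adRight_adRight_of_adRight_eq_zero hv, adRight_gen_adRight_gen_gen_eq_zero 0 0 (Or.inr rfl)]
    simp

end Yangian

lemma dividedPow_gen_mem_intYangian {n i : ℕ} (r t : ℕ) (hi : i < n - 1) :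
    dividedPow ℂ (gen ℂ n i r) t ∈ IntYangian n :=
  Algebra.subset_adjoin ⟨i, r, t, hi, rfl⟩

theorem stmt_11_general (n : ℕ) (i j r t : ℕ) (hij : i ≤ j) (hj : j < n - 1) :
    ((t.factorial : ℂ)⁻¹) • rootVec ℂ n i j r ^ t ∈ IntYangian n := by
  change dividedPow ℂ _ t ∈ _
  induction j, hij using Nat.le_induction with
  | base => rw [rootVec_self]; exact dividedPow_gen_mem_intYangian r t hj
  | succ j hij ih =>
    rw [rootVec_succ r hij,
      dividedPow_adRight_eq_sum (adRight_gen_adRight_gen_rootVec_eq_zero r hij)]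
    refine sum_mem fun k _ => zsmul_mem (mul_mem (mul_mem ?_ (ih (by omega))) ?_) _
    all_goals exact dividedPow_gen_mem_intYangian 0 _ hj

/-- for every positive root `β = [i,j] ∈ Δ⁺` (0-based: `i ≤ j ≤ n−2`) and all
`r, t ∈ ℕ`, the divided power `e_β(r)^t / t!` lies in the integral form `𝐘_n^>`. -/
theorem stmt_11 (n : ℕ) (hn : 2 ≤ n) (i j r t : ℕ) (hij : i ≤ j) (hj : j < n - 1) :
    ((t.factorial : ℂ)⁻¹) • rootVec ℂ n i j r ^ t ∈ IntYangian n :=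
  stmt_11_general n i j r t hij hj
end
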